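/- arXiv:2412.14641 — 7 statements merged into one kernel-verified Lean document; each statement's English description precedes it below -/
import Mathlib

section
/- Suppose m is even. Then f_C is linear equivalent over F_q to the monomial map x ↦ x^{Q1+Q2+1+r_C(q−1)} on F_{q^2}; that is, there exist F_q-linear bijections L1, L2 : F_{q^2} → F_{q^2} such that for all x in F_{q^2}, f_C(x) = L1((L2(x))^{Q1+Q2+1+r_C(q−1)}). -/
/-- Auxiliary: the `K`-linear bijection `z ↦ A*z + B*z^q` of `F`, for `A ≠ B`
fixed by the `q`-power map. -/
private theorem mkAB {K F : Type*} [Field K] [Field F] [Fintype F] [Algebra K F]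
    (q : ℕ)
    (hKq : ∀ c : K, (algebraMap K F c) ^ q = algebraMap K F c)
    (hfrobq : ∀ a b : F, (a + b) ^ q = a ^ q + b ^ q)
    (hFqq : ∀ z : F, z ^ (q * q) = z)
    (h2 : (2 : F) = 0)
    (A B : F) (hAB : A ≠ B) (hA : A ^ q = A) (hB : B ^ q = B) :
    ∃ L : F ≃ₗ[K] F, ∀ z : F, L z = A * z + B * z ^ q := by
  have hker : ∀ w : F, A * w + B * w ^ q = 0 → w = 0 := by
    intro w hw
    have h1 : B * w ^ q = A * w := by linear_combination hw - A * w * h2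
    have h1q : (B * w ^ q) ^ q = (A * w) ^ q := by rw [h1]
    rw [mul_pow, mul_pow, ← pow_mul, hFqq, hA, hB] at h1q
    have key : (A - B) * ((A + B) * w) = 0 := by
      linear_combination (-A) * h1 + B * h1q + (A * B * w ^ q - B * B * w) * h2
    rcases mul_eq_zero.mp key with h | h
    · exact absurd (sub_eq_zero.mp h) hAB
    · rcases mul_eq_zero.mp h with h' | h'
      · exact absurd (by linear_combination h' - B * h2 : A = B) hAB
      · exact h'
  have hsm : ∀ (c : K) (z : F),
      A * (c • z) + B * (c • z) ^ q = c • (A * z + B * z ^ q) := by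
    intro c z
    rw [Algebra.smul_def, Algebra.smul_def, mul_pow, hKq]
    ring
  let ℓ : F →ₗ[K] F :=
    { toFun := fun z => A * z + B * z ^ q
      map_add' := fun a b => by
        show A * (a + b) + B * (a + b) ^ q = A * a + B * a ^ q + (A * b + B * b ^ q)
        rw [hfrobq]; ring
      map_smul' := fun c z => by
        show A * (c • z) + B * (c • z) ^ q = (RingHom.id K) c • (A * z + B * z ^ q)
        simp only [RingHom.id_apply]; exact hsm c z }
  have hinj : Function.Injective ℓ := by
    intro a b hab
    simp only [ℓ, LinearMap.coe_mk, AddHom.coe_mk] at hab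
    have hsum : A * (a + b) + B * (a + b) ^ q = 0 := by
      rw [hfrobq]; linear_combination hab + (A * b + B * b ^ q) * h2
    have h0 := hker _ hsum
    linear_combination h0 - b * h2
  exact ⟨LinearEquiv.ofBijective ℓ (Finite.injective_iff_bijective.mp hinj), fun z => rfl⟩

/-- The integer `r_C` from Theorem C (ii). -/
def rC (i j : ℕ) : ℕ :=
  if Even i ∧ Even j then 0
  else if Odd i ∧ Odd j then 1
  else if Odd i then  -- i odd, j even
    (if 2 ^ i ≤ 2 ^ j then 2 ^ i else 2 ^ j + 1)
  else  -- i even, j odd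
    (if 2 ^ i < 2 ^ j then 2 ^ i + 1 else 2 ^ j)

/-- Theorem C, case (ii), linear equivalence part: for `m` even, `f_C` is
linear equivalent over `F_q` to `x ↦ x^{Q1+Q2+1+r_C(q-1)}` on `F_{q^2}`. -/
theorem fC_linear_equiv_of_even
    (m i j : ℕ) (hm : 0 < m) (hi : 0 < i) (hj : 0 < j)
    (q Q1 Q2 : ℕ) (hq : q = 2 ^ m) (hQ1 : Q1 = 2 ^ i) (hQ2 : Q2 = 2 ^ j)
    (K F : Type*) [Field K] [Fintype K] [Field F] [Fintype F] [Algebra K F]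
    (hK : Fintype.card K = q) (hF : Fintype.card F = q ^ 2)
    (hme : Even m) :
    ∃ (L1 L2 : F ≃ₗ[K] F),
      ∀ x : F,
        x ^ (q * (Q1 + Q2 + 1)) + x ^ (q * Q1 + Q2 + 1) + x ^ (q * Q2 + Q1 + 1) +
          x ^ (q + Q1 + Q2) + x ^ (Q1 + Q2 + 1) =
        L1 ((L2 x) ^ (Q1 + Q2 + 1 + rC i j * (q - 1))) := by
  classical
  have hq1 : 1 ≤ q := by rw [hq]; exact Nat.one_le_two_pow
  obtain ⟨q', hq'⟩ : ∃ q', q = q' + 1 := ⟨q - 1, by omega⟩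
  haveI : Fact (Nat.Prime 2) := ⟨Nat.prime_two⟩
  -- characteristic two
  have h2 : (2 : F) = 0 := by
    have hc := FiniteField.cast_card_eq_zero F
    rw [hF, hq] at hc
    have hc2 : ((2 : F) ^ m) ^ 2 = 0 := by push_cast at hc; exact_mod_cast hc
    have hc3 : (2 : F) ^ (m * 2) = 0 := by rw [pow_mul]; exact hc2
    exact pow_eq_zero_iff (by omega) |>.mp hc3
  haveI : CharP F 2 := CharTwo.of_one_ne_zero_of_two_eq_zero one_ne_zero h2
  have hfrob : ∀ (n : ℕ) (a b : F), (a + b) ^ (2 ^ n) = a ^ (2 ^ n) + b ^ (2 ^ n) :=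
    fun n a b => add_pow_char_pow a b 2 n
  have hfrobq : ∀ a b : F, (a + b) ^ q = a ^ q + b ^ q := fun a b => by
    rw [hq]; exact hfrob m a b
  have hFqq : ∀ z : F, z ^ (q * q) = z := fun z => by
    rw [show q * q = q ^ 2 from (sq q).symm, ← hF]; exact FiniteField.pow_card z
  have hKq : ∀ c : K, (algebraMap K F c) ^ q = algebraMap K F c := fun c => by
    rw [← map_pow, ← hK, FiniteField.pow_card]
  -- a primitive cube root of unity in F
  haveI : Fact (Nat.Prime 3) := ⟨by norm_num⟩
  have hdvd : 3 ∣ Fintype.card Fˣ := by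
    rw [Fintype.card_units, hF]
    have h4 : q ^ 2 % 3 = 1 := by
      rw [hq, ← pow_mul, mul_comm, pow_mul, show (2 : ℕ) ^ 2 = 4 from rfl, Nat.pow_mod]
      norm_num
    generalize q ^ 2 = N at h4 ⊢
    omega
  obtain ⟨g, hg⟩ := exists_prime_orderOf_dvd_card 3 hdvd
  set ω : F := ((g : Fˣ) : F) with hwdef
  have hω3 : ω ^ 3 = 1 := by
    have h := pow_orderOf_eq_one g
    rw [hg] at h
    have h' := congrArg (fun u : Fˣ => (u : F)) h
    simpa [hwdef] using h'
  have hω1 : ω ≠ 1 := by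
    intro h
    have hg1 : g = 1 := Units.ext (by simpa [hwdef] using h)
    rw [hg1, orderOf_one] at hg
    norm_num at hg
  have hω : ω ^ 2 + ω + 1 = 0 := by
    have hfac : (ω - 1) * (ω ^ 2 + ω + 1) = 0 := by linear_combination hω3
    rcases mul_eq_zero.mp hfac with h | h
    · exact absurd (sub_eq_zero.mp h) hω1
    · exact h
  have hω0 : ω ≠ 0 := by
    intro h
    rw [h] at hω3
    norm_num at hω3
  have hw21 : ω ^ 2 ≠ 1 := by
    intro h
    apply hω1
    calc ω = ω ^ 2 * ω ^ 2 := by linear_combination (-ω) * hω3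
    _ = 1 := by rw [h]; norm_num
  have hne2w : ω ^ 2 ≠ ω := by
    intro h
    have h0 : ω * (ω - 1) = 0 := by linear_combination h
    rcases mul_eq_zero.mp h0 with h' | h'
    · exact hω0 h'
    · exact hω1 (sub_eq_zero.mp h')
  have h1w : (1 : F) ≠ ω := fun h => hω1 h.symm
  have h1w2 : (1 : F) ≠ ω ^ 2 := fun h => hw21 h.symm
  have hpow : ∀ k : ℕ, ω ^ (2 ^ k) = if Even k then ω else ω ^ 2 := by
    intro k
    induction k with
    | zero => simp
    | succ n ih =>
      rw [pow_succ, pow_mul, ih]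
      by_cases h : Even n
      · rw [if_pos h, if_neg (by simp [Nat.even_add_one, h])]
      · rw [if_neg h, if_pos (Nat.even_add_one.mpr h)]
        linear_combination ω * hω3
  have hwq : ω ^ q = ω := by rw [hq, hpow m, if_pos hme]
  have hw2q : (ω ^ 2) ^ q = ω ^ 2 := by rw [← pow_mul, mul_comm, pow_mul, hwq]
  have h1qq : (1 : F) ^ q = 1 := one_pow q
  -- the linear bijection L2 : x ↦ x^q + ω x
  obtain ⟨L2, hL2⟩ := mkAB (K := K) (F := F) q hKq hfrobq hFqq h2 ω 1 hω1 hwq h1qq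
  have hz : ∀ x : F, L2 x = x ^ q + ω * x := fun x => by rw [hL2]; ring
  have hzq : ∀ x : F, (L2 x) ^ q = x + ω * x ^ q := by
    intro x
    rw [hz, hfrobq, mul_pow, hwq, ← pow_mul, hFqq]
  have hzqq : ∀ x : F, ((L2 x) ^ q) ^ q = L2 x := fun x => by
    rw [← pow_mul]; exact hFqq _
  have hfQ1 : ∀ a b : F, (a + b) ^ Q1 = a ^ Q1 + b ^ Q1 := fun a b => by
    rw [hQ1]; exact hfrob i a b
  have hfQ2 : ∀ a b : F, (a + b) ^ Q2 = a ^ Q2 + b ^ Q2 := fun a b => by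
    rw [hQ2]; exact hfrob j a b
  have hzQ1 : ∀ x : F, (L2 x) ^ Q1 = (x ^ q) ^ Q1 + ω ^ Q1 * x ^ Q1 := fun x => by
    rw [hz, hfQ1, mul_pow]
  have hzQ2 : ∀ x : F, (L2 x) ^ Q2 = (x ^ q) ^ Q2 + ω ^ Q2 * x ^ Q2 := fun x => by
    rw [hz, hfQ2, mul_pow]
  have hzqQ1 : ∀ x : F, ((L2 x) ^ q) ^ Q1 = x ^ Q1 + ω ^ Q1 * (x ^ q) ^ Q1 := fun x => by
    rw [hzq, hfQ1, mul_pow]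
  have hzqQ2 : ∀ x : F, ((L2 x) ^ q) ^ Q2 = x ^ Q2 + ω ^ Q2 * (x ^ q) ^ Q2 := fun x => by
    rw [hzq, hfQ2, mul_pow]
  rcases Nat.even_or_odd i with hie | hio <;> rcases Nat.even_or_odd j with hje | hjo
  · -- Case 1 : i even, j even
    have hr : rC i j = 0 := by simp [rC, hie, hje]
    have hwQ1 : ω ^ Q1 = ω := by rw [hQ1, hpow i, if_pos hie]
    have hwQ2 : ω ^ Q2 = ω := by rw [hQ2, hpow j, if_pos hje]
    obtain ⟨L1, hL1⟩ := mkAB (K := K) (F := F) q hKq hfrobq hFqq h2 (ω ^ 2) ω hne2w hw2q hwq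
    refine ⟨L1, L2, fun x => ?_⟩
    rw [hr, show Q1 + Q2 + 1 + 0 * (q - 1) = Q1 + (Q2 + 1) by omega, hL1]
    rw [show (L2 x) ^ (Q1 + (Q2 + 1)) = (L2 x) ^ Q1 * ((L2 x) ^ Q2 * L2 x) by
      rw [pow_add, pow_add, pow_one]]
    rw [mul_pow, mul_pow, pow_right_comm (L2 x) Q1 q, pow_right_comm (L2 x) Q2 q]
    rw [hzqQ1, hzqQ2, hzQ1, hzQ2, hzq, hz, hwQ1, hwQ2]
    linear_combination ((-1)*(x^Q1)*(x^Q2)*x + (1)*(x^Q1)*(x^Q2)*x*ω^2 + (-1)*(x^Q1)*(x^Q2)*x*ω^3 + (-1)*(x^Q1)*(x^Q2)*(x^q) + (1)*(x^Q1)*(x^Q2)*(x^q)*ω + (-1)*(x^Q1)*(x^Q2)*(x^q)*ω^2 + (-1)*(x^Q1)*((x^q)^Q2)*x + (1)*(x^Q1)*((x^q)^Q2)*x*ω + (-1)*(x^Q1)*((x^q)^Q2)*x*ω^2 + (2)*(x^Q1)*((x^q)^Q2)*(x^q) + (-2)*(x^Q1)*((x^q)^Q2)*(x^q)*ω + (-1)*((x^q)^Q1)*(x^Q2)*x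 + (1)*((x^q)^Q1)*(x^Q2)*x*ω + (-1)*((x^q)^Q1)*(x^Q2)*x*ω^2 + (2)*((x^q)^Q1)*(x^Q2)*(x^q) + (-2)*((x^q)^Q1)*(x^Q2)*(x^q)*ω + (2)*((x^q)^Q1)*((x^q)^Q2)*x + (-2)*((x^q)^Q1)*((x^q)^Q2)*x*ω + (-1)*((x^q)^Q1)*((x^q)^Q2)*(x^q) + (1)*((x^q)^Q1)*((x^q)^Q2)*(x^q)*ω + (-1)*((x^q)^Q1)*((x^q)^Q2)*(x^q)*ω^2) * hω + ((1)*(x^Q1)*(x^Q2)*x + (1)*(x^Q1)*(x^Q2)*(x^q) + (1)*(x^Q1)*((x^q)^Q2)*x + (-1)*(x^Q1)*((x^q)^Q2)*(x^q) + (1)*((x^q)^Q1)*(x^Q2)*x + (-1)*((x^q)^Q1)*(x^Q2)*(x^q) + (-1)*((x^q)^Q1)*((x^q)^Q2)*x + (1)*((x^q)^Q1)*((x^q)^Q2)*(x^q)) * h2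
  · -- i even, j odd
    have hwQ1 : ω ^ Q1 = ω := by rw [hQ1, hpow i, if_pos hie]
    have hwQ2 : ω ^ Q2 = ω ^ 2 := by rw [hQ2, hpow j, if_neg (Nat.not_even_iff_odd.mpr hjo)]
    rcases lt_or_ge (2 ^ i) (2 ^ j) with hlt | hge
    · -- Case 5 : Q1 < Q2
      have hr : rC i j = Q1 + 1 := by
        rw [hQ1]
        simp [rC, Nat.not_odd_iff_even.mpr hie, Nat.not_even_iff_odd.mpr hjo, hlt]
      obtain ⟨L1, hL1⟩ := mkAB (K := K) (F := F) q hKq hfrobq hFqq h2 (ω ^ 2) 1 hw21 hw2q h1qq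
      refine ⟨L1, L2, fun x => ?_⟩
      rw [hr, show Q1 + Q2 + 1 + (Q1 + 1) * (q - 1) = Q2 + (q * Q1 + q) by
        rw [hq', Nat.add_sub_cancel]; ring, hL1]
      rw [show (L2 x) ^ (Q2 + (q * Q1 + q)) = (L2 x) ^ Q2 * (((L2 x) ^ q) ^ Q1 * (L2 x) ^ q) by
        rw [pow_add, pow_add, pow_mul]]
      rw [mul_pow, mul_pow, pow_right_comm (L2 x) Q2 q, pow_right_comm ((L2 x) ^ q) Q1 q, hzqq]
      rw [hzqQ1, hzqQ2, hzQ1, hzQ2, hzq, hz, hwQ1, hwQ2]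
      linear_combination ((-1)*(x^Q1)*(x^Q2)*x + (1)*(x^Q1)*(x^Q2)*x*ω + (-1)*(x^Q1)*(x^Q2)*x*ω^2 + (-1)*(x^Q1)*(x^Q2)*(x^q) + (1)*(x^Q1)*(x^Q2)*(x^q)*ω^2 + (-1)*(x^Q1)*(x^Q2)*(x^q)*ω^3 + (-1)*(x^Q1)*((x^q)^Q2)*x + (1)*(x^Q1)*((x^q)^Q2)*x*ω + (-1)*(x^Q1)*((x^q)^Q2)*x*ω^2 + (2)*(x^Q1)*((x^q)^Q2)*(x^q) + (-2)*(x^Q1)*((x^q)^Q2)*(x^q)*ω + (-1)*((x^q)^Q1)*(x^Q2)*x + (1)*((x^q)^Q1)*(x^Q2)*x*ω^2 + (-1)*((x^q)^Q1)*(x^Q2)*x*ω^3 + (1)*((x^q)^Q1)*(x^Q2)*(x^q) + (-1)*((x^q)^Q1)*(x^Q2)*(x^q)*ω + (1)*((x^q)^Q1)*(x^Q2)*(x^q)*ω^3 + (-1)*((x^q)^Q1)*(x^Q2)*(x^q)*ω^4 + (2)*((x^q)^Q1)*((x^q)^Q2)*x + (-2)*((x^q)^Q1)*((x^q)^Q2)*x*ω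 + (-1)*((x^q)^Q1)*((x^q)^Q2)*(x^q) + (1)*((x^q)^Q1)*((x^q)^Q2)*(x^q)*ω + (-1)*((x^q)^Q1)*((x^q)^Q2)*(x^q)*ω^2) * hω + ((1)*(x^Q1)*(x^Q2)*x + (1)*(x^Q1)*(x^Q2)*(x^q) + (1)*(x^Q1)*((x^q)^Q2)*x + (-1)*(x^Q1)*((x^q)^Q2)*(x^q) + (1)*((x^q)^Q1)*(x^Q2)*x + (-1)*((x^q)^Q1)*(x^Q2)*(x^q) + (-1)*((x^q)^Q1)*((x^q)^Q2)*x + (1)*((x^q)^Q1)*((x^q)^Q2)*(x^q)) * h2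
    · -- Case 6 : Q1 ≥ Q2
      have hr : rC i j = Q2 := by
        rw [hQ2]
        simp [rC, Nat.not_odd_iff_even.mpr hie, Nat.not_even_iff_odd.mpr hjo,
          show ¬ (2 ^ i < 2 ^ j) by omega]
      obtain ⟨L1, hL1⟩ := mkAB (K := K) (F := F) q hKq hfrobq hFqq h2 1 (ω ^ 2) h1w2 h1qq hw2q
      refine ⟨L1, L2, fun x => ?_⟩
      rw [hr, show Q1 + Q2 + 1 + Q2 * (q - 1) = Q1 + (1 + q * Q2) by
        rw [hq', Nat.add_sub_cancel]; ring, hL1]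
      rw [show (L2 x) ^ (Q1 + (1 + q * Q2)) = (L2 x) ^ Q1 * (L2 x * ((L2 x) ^ q) ^ Q2) by
        rw [pow_add, pow_add, pow_one, pow_mul]]
      rw [mul_pow, mul_pow, pow_right_comm (L2 x) Q1 q, pow_right_comm ((L2 x) ^ q) Q2 q, hzqq]
      rw [hzqQ1, hzqQ2, hzQ1, hzQ2, hzq, hz, hwQ1, hwQ2]
      linear_combination ((-1)*(x^Q1)*(x^Q2)*x + (1)*(x^Q1)*(x^Q2)*x*ω + (-1)*(x^Q1)*(x^Q2)*x*ω^2 + (-1)*(x^Q1)*(x^Q2)*(x^q) + (1)*(x^Q1)*(x^Q2)*(x^q)*ω^2 + (-1)*(x^Q1)*(x^Q2)*(x^q)*ω^3 + (-1)*(x^Q1)*((x^q)^Q2)*x + (1)*(x^Q1)*((x^q)^Q2)*x*ω + (-1)*(x^Q1)*((x^q)^Q2)*x*ω^2 + (2)*(x^Q1)*((x^q)^Q2)*(x^q) + (-2)*(x^Q1)*((x^q)^Q2)*(x^q)*ω + (-1)*((x^q)^Q1)*(x^Q2)*x + (1)*((x^q)^Q1)*(x^Q2)*x*ω^2 + (-1)*((x^q)^Q1)*(x^Q2)*x*ω^3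 + (1)*((x^q)^Q1)*(x^Q2)*(x^q) + (-1)*((x^q)^Q1)*(x^Q2)*(x^q)*ω + (1)*((x^q)^Q1)*(x^Q2)*(x^q)*ω^3 + (-1)*((x^q)^Q1)*(x^Q2)*(x^q)*ω^4 + (2)*((x^q)^Q1)*((x^q)^Q2)*x + (-2)*((x^q)^Q1)*((x^q)^Q2)*x*ω + (-1)*((x^q)^Q1)*((x^q)^Q2)*(x^q) + (1)*((x^q)^Q1)*((x^q)^Q2)*(x^q)*ω + (-1)*((x^q)^Q1)*((x^q)^Q2)*(x^q)*ω^2) * hω + ((1)*(x^Q1)*(x^Q2)*x + (1)*(x^Q1)*(x^Q2)*(x^q) + (1)*(x^Q1)*((x^q)^Q2)*x + (-1)*(x^Q1)*((x^q)^Q2)*(x^q) + (1)*((x^q)^Q1)*(x^Q2)*x + (-1)*((x^q)^Q1)*(x^Q2)*(x^q) + (-1)*((x^q)^Q1)*((x^q)^Q2)*x + (1)*((x^q)^Q1)*((x^q)^Q2)*(x^q)) * h2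
  · -- i odd, j even
    have hwQ1 : ω ^ Q1 = ω ^ 2 := by rw [hQ1, hpow i, if_neg (Nat.not_even_iff_odd.mpr hio)]
    have hwQ2 : ω ^ Q2 = ω := by rw [hQ2, hpow j, if_pos hje]
    rcases le_or_gt (2 ^ i) (2 ^ j) with hle | hlt
    · -- Case 3 : Q1 ≤ Q2
      have hr : rC i j = Q1 := by
        rw [hQ1]
        simp [rC, Nat.not_even_iff_odd.mpr hio, Nat.not_odd_iff_even.mpr hje, hio, hle]
      obtain ⟨L1, hL1⟩ := mkAB (K := K) (F := F) q hKq hfrobq hFqq h2 1 (ω ^ 2) h1w2 h1qq hw2q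
      refine ⟨L1, L2, fun x => ?_⟩
      rw [hr, show Q1 + Q2 + 1 + Q1 * (q - 1) = Q2 + (1 + q * Q1) by
        rw [hq', Nat.add_sub_cancel]; ring, hL1]
      rw [show (L2 x) ^ (Q2 + (1 + q * Q1)) = (L2 x) ^ Q2 * (L2 x * ((L2 x) ^ q) ^ Q1) by
        rw [pow_add, pow_add, pow_one, pow_mul]]
      rw [mul_pow, mul_pow, pow_right_comm (L2 x) Q2 q, pow_right_comm ((L2 x) ^ q) Q1 q, hzqq]
      rw [hzqQ1, hzqQ2, hzQ1, hzQ2, hzq, hz, hwQ1, hwQ2]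
      linear_combination ((-1)*(x^Q1)*(x^Q2)*x + (1)*(x^Q1)*(x^Q2)*x*ω + (-1)*(x^Q1)*(x^Q2)*x*ω^2 + (-1)*(x^Q1)*(x^Q2)*(x^q) + (1)*(x^Q1)*(x^Q2)*(x^q)*ω^2 + (-1)*(x^Q1)*(x^Q2)*(x^q)*ω^3 + (-1)*(x^Q1)*((x^q)^Q2)*x + (1)*(x^Q1)*((x^q)^Q2)*x*ω^2 + (-1)*(x^Q1)*((x^q)^Q2)*x*ω^3 + (1)*(x^Q1)*((x^q)^Q2)*(x^q) + (-1)*(x^Q1)*((x^q)^Q2)*(x^q)*ω + (1)*(x^Q1)*((x^q)^Q2)*(x^q)*ω^3 + (-1)*(x^Q1)*((x^q)^Q2)*(x^q)*ω^4 + (-1)*((x^q)^Q1)*(x^Q2)*x + (1)*((x^q)^Q1)*(x^Q2)*x*ω + (-1)*((x^q)^Q1)*(x^Q2)*x*ω^2 + (2)*((x^q)^Q1)*(x^Q2)*(x^q) + (-2)*((x^q)^Q1)*(x^Q2)*(x^q)*ω + (2)*((x^q)^Q1)*((x^q)^Q2)*x + (-2)*((x^q)^Q1)*((x^q)^Q2)*x*ω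 + (-1)*((x^q)^Q1)*((x^q)^Q2)*(x^q) + (1)*((x^q)^Q1)*((x^q)^Q2)*(x^q)*ω + (-1)*((x^q)^Q1)*((x^q)^Q2)*(x^q)*ω^2) * hω + ((1)*(x^Q1)*(x^Q2)*x + (1)*(x^Q1)*(x^Q2)*(x^q) + (1)*(x^Q1)*((x^q)^Q2)*x + (-1)*(x^Q1)*((x^q)^Q2)*(x^q) + (1)*((x^q)^Q1)*(x^Q2)*x + (-1)*((x^q)^Q1)*(x^Q2)*(x^q) + (-1)*((x^q)^Q1)*((x^q)^Q2)*x + (1)*((x^q)^Q1)*((x^q)^Q2)*(x^q)) * h2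
    · -- Case 4 : Q1 > Q2
      have hr : rC i j = Q2 + 1 := by
        rw [hQ2]
        simp [rC, Nat.not_even_iff_odd.mpr hio, Nat.not_odd_iff_even.mpr hje, hio,
          show ¬ (2 ^ i ≤ 2 ^ j) by omega]
      obtain ⟨L1, hL1⟩ := mkAB (K := K) (F := F) q hKq hfrobq hFqq h2 (ω ^ 2) 1 hw21 hw2q h1qq
      refine ⟨L1, L2, fun x => ?_⟩
      rw [hr, show Q1 + Q2 + 1 + (Q2 + 1) * (q - 1) = Q1 + (q * Q2 + q) by
        rw [hq', Nat.add_sub_cancel]; ring, hL1]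
      rw [show (L2 x) ^ (Q1 + (q * Q2 + q)) = (L2 x) ^ Q1 * (((L2 x) ^ q) ^ Q2 * (L2 x) ^ q) by
        rw [pow_add, pow_add, pow_mul]]
      rw [mul_pow, mul_pow, pow_right_comm (L2 x) Q1 q, pow_right_comm ((L2 x) ^ q) Q2 q, hzqq]
      rw [hzqQ1, hzqQ2, hzQ1, hzQ2, hzq, hz, hwQ1, hwQ2]
      linear_combination ((-1)*(x^Q1)*(x^Q2)*x + (1)*(x^Q1)*(x^Q2)*x*ω + (-1)*(x^Q1)*(x^Q2)*x*ω^2 + (-1)*(x^Q1)*(x^Q2)*(x^q) + (1)*(x^Q1)*(x^Q2)*(x^q)*ω^2 + (-1)*(x^Q1)*(x^Q2)*(x^q)*ω^3 + (-1)*(x^Q1)*((x^q)^Q2)*x + (1)*(x^Q1)*((x^q)^Q2)*x*ω^2 + (-1)*(x^Q1)*((x^q)^Q2)*x*ω^3 + (1)*(x^Q1)*((x^q)^Q2)*(x^q) + (-1)*(x^Q1)*((x^q)^Q2)*(x^q)*ω + (1)*(x^Q1)*((x^q)^Q2)*(x^q)*ω^3 + (-1)*(x^Q1)*((x^q)^Q2)*(x^q)*ω^4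 + (-1)*((x^q)^Q1)*(x^Q2)*x + (1)*((x^q)^Q1)*(x^Q2)*x*ω + (-1)*((x^q)^Q1)*(x^Q2)*x*ω^2 + (2)*((x^q)^Q1)*(x^Q2)*(x^q) + (-2)*((x^q)^Q1)*(x^Q2)*(x^q)*ω + (2)*((x^q)^Q1)*((x^q)^Q2)*x + (-2)*((x^q)^Q1)*((x^q)^Q2)*x*ω + (-1)*((x^q)^Q1)*((x^q)^Q2)*(x^q) + (1)*((x^q)^Q1)*((x^q)^Q2)*(x^q)*ω + (-1)*((x^q)^Q1)*((x^q)^Q2)*(x^q)*ω^2) * hω + ((1)*(x^Q1)*(x^Q2)*x + (1)*(x^Q1)*(x^Q2)*(x^q) + (1)*(x^Q1)*((x^q)^Q2)*x + (-1)*(x^Q1)*((x^q)^Q2)*(x^q) + (1)*((x^q)^Q1)*(x^Q2)*x + (-1)*((x^q)^Q1)*(x^Q2)*(x^q) + (-1)*((x^q)^Q1)*((x^q)^Q2)*x + (1)*((x^q)^Q1)*((x^q)^Q2)*(x^q)) * h2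
  · -- Case 2 : i odd, j odd
    have hwQ1 : ω ^ Q1 = ω ^ 2 := by rw [hQ1, hpow i, if_neg (Nat.not_even_iff_odd.mpr hio)]
    have hwQ2 : ω ^ Q2 = ω ^ 2 := by rw [hQ2, hpow j, if_neg (Nat.not_even_iff_odd.mpr hjo)]
    have hr : rC i j = 1 := by
      simp [rC, hio, hjo, Nat.not_even_iff_odd.mpr hio, Nat.not_even_iff_odd.mpr hjo]
    obtain ⟨L1, hL1⟩ := mkAB (K := K) (F := F) q hKq hfrobq hFqq h2 1 ω h1w h1qq hwq
    refine ⟨L1, L2, fun x => ?_⟩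
    rw [hr, show Q1 + Q2 + 1 + 1 * (q - 1) = Q1 + (Q2 + q) by omega, hL1]
    rw [show (L2 x) ^ (Q1 + (Q2 + q)) = (L2 x) ^ Q1 * ((L2 x) ^ Q2 * (L2 x) ^ q) by
      rw [pow_add, pow_add]]
    rw [mul_pow, mul_pow, pow_right_comm (L2 x) Q1 q, pow_right_comm (L2 x) Q2 q, hzqq]
    rw [hzqQ1, hzqQ2, hzQ1, hzQ2, hzq, hz, hwQ1, hwQ2]
    linear_combination ((-1)*(x^Q1)*(x^Q2)*x + (1)*(x^Q1)*(x^Q2)*x*ω + (-1)*(x^Q1)*(x^Q2)*x*ω^2 + (-1)*(x^Q1)*(x^Q2)*(x^q) + (1)*(x^Q1)*(x^Q2)*(x^q)*ω^2 + (-1)*(x^Q1)*(x^Q2)*(x^q)*ω^3 + (-1)*(x^Q1)*((x^q)^Q2)*x + (1)*(x^Q1)*((x^q)^Q2)*x*ω + (-1)*(x^Q1)*((x^q)^Q2)*x*ω^2 + (2)*(x^Q1)*((x^q)^Q2)*(x^q) + (-2)*(x^Q1)*((x^q)^Q2)*(x^q)*ω + (-1)*((x^q)^Q1)*(x^Q2)*x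 + (1)*((x^q)^Q1)*(x^Q2)*x*ω + (-1)*((x^q)^Q1)*(x^Q2)*x*ω^2 + (2)*((x^q)^Q1)*(x^Q2)*(x^q) + (-2)*((x^q)^Q1)*(x^Q2)*(x^q)*ω + (1)*((x^q)^Q1)*((x^q)^Q2)*x + (-1)*((x^q)^Q1)*((x^q)^Q2)*x*ω + (1)*((x^q)^Q1)*((x^q)^Q2)*x*ω^3 + (-1)*((x^q)^Q1)*((x^q)^Q2)*x*ω^4 + (-1)*((x^q)^Q1)*((x^q)^Q2)*(x^q) + (1)*((x^q)^Q1)*((x^q)^Q2)*(x^q)*ω^2 + (-1)*((x^q)^Q1)*((x^q)^Q2)*(x^q)*ω^3) * hω + ((1)*(x^Q1)*(x^Q2)*x + (1)*(x^Q1)*(x^Q2)*(x^q) + (1)*(x^Q1)*((x^q)^Q2)*x + (-1)*(x^Q1)*((x^q)^Q2)*(x^q) + (1)*((x^q)^Q1)*(x^Q2)*x + (-1)*((x^q)^Q1)*(x^Q2)*(x^q) + (-1)*((x^q)^Q1)*((x^q)^Q2)*x + (1)*((x^q)^Q1)*((x^q)^Q2)*(x^q)) * h2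
end

section
/- In the polynomial ring F_2[x], the monic greatest common divisor of N_A(x) and H_A(x) equals (x^2 + x + 1)^{r_A}. -/
open Polynomial

/-- The integer `r_A`. -/
def rA (i j : ℕ) : ℕ :=
  if Odd i ∧ Odd j then 0
  else if Even i ∧ Even j then 1
  else if Even i then  -- i even, j odd
    (if 2 ^ i ≤ 2 ^ j then 2 ^ i else 2 ^ j + 1)
  else  -- i odd, j even
    (if 2 ^ i < 2 ^ j then 2 ^ i + 1 else 2 ^ j)

namespace GcdNAHAAux

abbrev R := Polynomial (ZMod 2)

lemma two_eq_zero : (2 : R) = 0 := by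
  have := CharP.cast_eq_zero R 2; simpa using this

lemma frob (a b : R) (n : ℕ) : (a+b)^(2^n) = a^(2^n) + b^(2^n) := add_pow_char_pow a b 2 n

lemma isUnit_eq_one {p : R} (h : IsUnit p) : p = 1 := by
  obtain ⟨r, hr, rfl⟩ := Polynomial.isUnit_iff.mp h
  have h0 : r ≠ 0 := hr.ne_zero
  have : ∀ s : ZMod 2, s ≠ 0 → s = 1 := by decide
  simp [this r h0]

lemma dvd_antisymm₂ {a b : R} (h1 : a ∣ b) (h2 : b ∣ a) : a = b := by
  obtain ⟨u, hu⟩ := associated_of_dvd_dvd h1 h2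
  rw [← hu, isUnit_eq_one u.isUnit, mul_one]

lemma monic_P : (X^2+X+1 : R).Monic := by monicity!

lemma prime_P : Prime (X^2+X+1 : R) := by
  have hm := monic_P
  have hdeg : (X^2+X+1 : R).natDegree = 2 := by compute_degree!
  have hirr : Irreducible (X^2+X+1 : R) := by
    rw [hm.irreducible_iff_roots_eq_zero_of_degree_le_three (by omega) (by omega),
      Multiset.eq_zero_iff_forall_notMem]
    intro z hz
    rw [mem_roots hm.ne_zero] at hz
    simp only [IsRoot, eval_add, eval_pow, eval_X, eval_one] at hz
    exact (by decide : ∀ s : ZMod 2, ¬(s^2 + s + 1 = 0)) z hz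
  exact hirr.prime

lemma coprime_add_mul {a b c : R} (h : IsCoprime a b) : IsCoprime a (b + a*c) := by
  obtain ⟨s, t, hst⟩ := h
  exact ⟨s - t*c, t, by linear_combination hst⟩

lemma P_dvd_X3k (k : ℕ) : (X^2+X+1 : R) ∣ X^(3*k) + 1 := by
  induction k with
  | zero =>
      have h : (X^(3*0) + 1 : R) = 0 := by
        rw [Nat.mul_zero, pow_zero]; linear_combination two_eq_zero
      rw [h]; exact dvd_zero _
  | succ n ih =>
      have key : (X^(3*(n+1)) + 1 : R)
          = X^3 * (X^(3*n) + 1) + (X+1) * (X^2+X+1) := by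
        have h1 : 3*(n+1) = 3*n + 3 := by ring
        rw [h1]
        linear_combination (-(X^3+X^2+X)) * two_eq_zero
      rw [key]
      exact dvd_add (Dvd.dvd.mul_left ih _) (Dvd.intro_left _ rfl)

lemma P_dvd_X4n (n : ℕ) : (X^2+X+1 : R) ∣ X^(4^n) + X := by
  induction n with
  | zero =>
      have h : (X^(4^0) + X : R) = 0 := by
        rw [pow_zero, pow_one]; linear_combination X * two_eq_zero
      rw [h]; exact dvd_zero _
  | succ n ih =>
      have h4 : (X^2+X+1 : R) ∣ X^4 + X :=
        ⟨X^2+X, by linear_combination (-(X^3+X^2)) * two_eq_zero⟩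
      have hfr : ((X^4 + X : R))^(4^n) = X^(4^(n+1)) + X^(4^n) := by
        have h : (4:ℕ)^n = 2^(2*n) := by rw [pow_mul]; norm_num
        rw [h, frob, ← pow_mul, ← h]
        congr 2
        rw [pow_succ, mul_comm]
      have key : (X^(4^(n+1)) + X : R) = (X^4+X)^(4^n) + (X^(4^n) + X) := by
        rw [hfr]; linear_combination (-(X^(4^n))) * two_eq_zero
      rw [key]
      exact dvd_add (dvd_pow h4 (by positivity)) ih

lemma P_dvd_even {i : ℕ} (h : Even i) : (X^2+X+1 : R) ∣ X^(2^i) + X := by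
  obtain ⟨n, rfl⟩ := h
  have : (2:ℕ)^(n+n) = 4^n := by
    rw [pow_add, show (4:ℕ) = 2*2 from rfl, mul_pow]
  rw [this]
  exact P_dvd_X4n n

lemma P_dvd_odd {i : ℕ} (h : Odd i) : (X^2+X+1 : R) ∣ X^(2^i) + X + 1 := by
  obtain ⟨n, rfl⟩ := h
  have he : (2:ℕ)^(2*n+1) = 2 * 4^n := by
    rw [pow_succ, pow_mul]; norm_num; ring
  have hsq : ((X^(4^n) + X : R))^2 = X^(2*4^n) + X^2 := by
    have := frob (X^(4^n) : R) X 1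
    simpa [pow_one, ← pow_mul, mul_comm] using this
  have key : (X^(2^(2*n+1)) + X + 1 : R) = (X^(4^n)+X)^2 + (X^2+X+1) := by
    rw [hsq, he]
    linear_combination (-(X^2)) * two_eq_zero
  rw [key]
  exact dvd_add (dvd_pow (P_dvd_X4n n) two_ne_zero) dvd_rfl

lemma sqfree (i : ℕ) (hi : 0 < i) : Squarefree (X^(2^i) + X : R) := by
  have hd : derivative (X^(2^i) + X : R) = 1 := by
    rw [derivative_add, derivative_X_pow, derivative_X]
    have h0 : ((2^i : ℕ) : ZMod 2) = 0 := by
      rw [ZMod.natCast_eq_zero_iff]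
      exact dvd_pow_self 2 hi.ne'
    rw [h0]; simp
  have hsep : (X^(2^i) + X : R).Separable := by
    unfold Polynomial.Separable
    rw [hd]; exact isCoprime_one_right
  exact hsep.squarefree

lemma exists_u1 {i : ℕ} (hi : 0 < i) (hev : Even i) :
    ∃ u₁ : R, (X^(2^i) + X : R) = (X^2+X+1)*u₁ ∧ ¬ (X^2+X+1 : R) ∣ u₁ := by
  obtain ⟨u₁, hu₁⟩ := P_dvd_even hev
  refine ⟨u₁, hu₁, fun hdvd => ?_⟩
  obtain ⟨c, hc⟩ := hdvd
  have hsq : (X^2+X+1 : R) * (X^2+X+1) ∣ X^(2^i) + X := ⟨c, by rw [hu₁, hc]; ring⟩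
  exact prime_P.not_unit (sqfree i hi _ hsq)

lemma not_P_dvd_u_odd {i : ℕ} (h : Odd i) : ¬ (X^2+X+1 : R) ∣ X^(2^i) + X := by
  intro hdvd
  have h1 : (X^2+X+1 : R) ∣ 1 := by
    have := dvd_sub (P_dvd_odd h) hdvd
    simpa using this
  exact prime_P.not_unit (isUnit_of_dvd_one h1)

lemma P_pow (n : ℕ) : ((X^2+X+1 : R))^(2^n) = X^(2*2^n) + X^(2^n) + 1 := by
  rw [show (X^2+X+1:R) = (X^2+X)+1 by ring, frob, frob, one_pow, ← pow_mul]

lemma four_pow_mod3 (m : ℕ) : ∃ k, 4^m = 3*k + 1 := by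
  induction m with
  | zero => exact ⟨0, rfl⟩
  | succ n ih => obtain ⟨k, hk⟩ := ih; exact ⟨4*k+1, by rw [pow_succ, hk]; ring⟩

/-- Equal parity: `P` does not divide `w = X^Q1 + X^Q2 + 1`. -/
lemma w_not_dvd_eq (i m : ℕ) :
    ¬ (X^2+X+1 : R) ∣ X^(2^i) + X^(2^(i+2*m)) + 1 := by
  obtain ⟨k, hk⟩ := four_pow_mod3 m
  have hexp : (2:ℕ)^(i+2*m) = 3*(k*2^i) + 2^i := by
    rw [pow_add, pow_mul]
    norm_num
    rw [hk]; ring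
  have hid : (X^(2^i) + X^(2^(i+2*m)) + 1 : R)
      = X^(2^i) * (X^(3*(k*2^i)) + 1) + 1 := by
    rw [hexp, pow_add]; ring
  intro hdvd
  rw [hid] at hdvd
  have h1 : (X^2+X+1 : R) ∣ 1 := by
    have h2 : (X^2+X+1 : R) ∣ X^(2^i) * (X^(3*(k*2^i)) + 1) :=
      Dvd.dvd.mul_left (P_dvd_X3k _) _
    have := dvd_sub hdvd h2
    simpa using this
  exact prime_P.not_unit (isUnit_of_dvd_one h1)

/-- Opposite parity: `w = X^Q1 + X^Q2 + 1 = P^Q1 * w₁` with `P ∤ w₁`, for `j = i + 2m+1`. -/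
lemma w_factor_opp (i m : ℕ) :
    ∃ w₁ : R, (X^(2^i) + X^(2^(i+(2*m+1))) + 1 : R) = (X^2+X+1)^(2^i) * w₁ ∧
      ¬ (X^2+X+1 : R) ∣ w₁ := by
  obtain ⟨k, hk⟩ := four_pow_mod3 m
  set Q1 := (2:ℕ)^i with hQ1
  have hexp : (2:ℕ)^(i+(2*m+1)) = 3*(2*k*Q1) + 2*Q1 := by
    rw [pow_add, pow_succ, pow_mul]
    norm_num
    rw [hk, hQ1]; ring
  -- P^(2*Q1) divides X^(3*(2*k*Q1)) + 1
  have hbig : ((X^2+X+1 : R))^(2*Q1) ∣ X^(3*(2*k*Q1)) + 1 := by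
    have h3 : (X^2+X+1 : R) ∣ X^(3*k) + 1 := P_dvd_X3k k
    have hpow : ((X^2+X+1 : R))^(2*Q1) ∣ (X^(3*k) + 1)^(2*Q1) :=
      pow_dvd_pow_of_dvd h3 _
    have hfr2 : ((X^(3*k) + 1 : R))^(2*Q1) = X^(3*(2*k*Q1)) + 1 := by
      have h2q : 2*Q1 = 2^(i+1) := by rw [hQ1, pow_succ]; ring
      rw [h2q, frob, one_pow, ← pow_mul]
      congr 2
      ring
    rwa [hfr2] at hpow
  obtain ⟨c, hc⟩ := hbig
  refine ⟨1 + X^(2*Q1) * (X^2+X+1)^Q1 * c, ?_, ?_⟩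
  · have hPp : ((X^2+X+1 : R))^Q1 = X^(2*Q1) + X^Q1 + 1 := P_pow i
    rw [hexp]
    calc (X^Q1 + X^(3*(2*k*Q1) + 2*Q1) + 1 : R)
        = (X^(2*Q1) + X^Q1 + 1) + X^(2*Q1) * ((X^2+X+1)^(2*Q1) * c) := by
          rw [← hc, pow_add]
          linear_combination (-(X^(2*Q1))) * two_eq_zero
      _ = (X^2+X+1)^Q1 * (1 + X^(2*Q1) * (X^2+X+1)^Q1 * c) := by
          have hsplit : ((X^2+X+1 : R))^(2*Q1) = (X^2+X+1)^Q1 * (X^2+X+1)^Q1 := by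
            rw [two_mul, pow_add]
          rw [hsplit, hPp]
          ring
  · intro hdvd
    have h1 : (X^2+X+1 : R) ∣ 1 := by
      have h2 : (X^2+X+1 : R) ∣ X^(2*Q1) * (X^2+X+1)^Q1 * c := by
        have : (X^2+X+1 : R) ∣ (X^2+X+1)^Q1 :=
          dvd_pow_self _ (by positivity : 0 < Q1).ne'
        exact (this.mul_left _).mul_right _
      have := dvd_sub hdvd h2
      simpa using this
    exact prime_P.not_unit (isUnit_of_dvd_one h1)

lemma NA_eq (Q1 Q2 : ℕ) :
    (X ^ (Q1 + Q2 + 1) + X ^ (Q1 + Q2) + X ^ Q1 + X ^ Q2 + X : R) =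
    (X+1) * (X ^ (Q1 + Q2) + X ^ (Q1 + 1) + X ^ (Q2 + 1) + X + 1)
      + (X^2+X+1) * (X^Q1 + X^Q2 + 1) := by
  linear_combination (-(X^Q1*X^2 + X^Q2*X^2 + X^2 + X + X^Q1*X + X^Q2*X + 1)) * two_eq_zero

lemma HA_eq (Q1 Q2 : ℕ) :
    (X ^ (Q1 + Q2) + X ^ (Q1 + 1) + X ^ (Q2 + 1) + X + 1 : R) =
    (X^(2*Q1) + X^Q1 + 1) + (X^Q1 + X) * (X^Q1 + X^Q2 + 1) := by
  linear_combination (-(X^Q1*X^Q1 + X^Q1)) * two_eq_zero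

lemma HA_eq' (Q1 Q2 : ℕ) :
    (X ^ (Q1 + Q2) + X ^ (Q1 + 1) + X ^ (Q2 + 1) + X + 1 : R) =
    (X^(2*Q2) + X^Q2 + 1) + (X^Q2 + X) * (X^Q1 + X^Q2 + 1) := by
  linear_combination (-(X^Q2*X^Q2 + X^Q2)) * two_eq_zero

lemma dvd_of_dvd_dvd_coprime {d a b c : R} (hb : d ∣ a * b) (hc : d ∣ a * c)
    (hco : IsCoprime b c) : d ∣ a := by
  obtain ⟨s, t, hst⟩ := hco
  have : a = s * (a * b) + t * (a * c) := by
    calc a = a * (s * b + t * c) := by rw [hst, mul_one]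
    _ = s * (a * b) + t * (a * c) := by ring
  rw [this]
  exact dvd_add (hb.mul_left s) (hc.mul_left t)

lemma core {N H P w H₁ W₁ : R} {r : ℕ}
    (hN : N = (X+1)*H + P*w) (hH : H = P^r * H₁) (hW : P*w = P^r * W₁)
    (hco : IsCoprime H₁ W₁) :
    EuclideanDomain.gcd N H = P^r := by
  apply dvd_antisymm₂
  · have hdH : EuclideanDomain.gcd N H ∣ H := EuclideanDomain.gcd_dvd_right N H
    have hdN : EuclideanDomain.gcd N H ∣ N := EuclideanDomain.gcd_dvd_left N H
    have hdw : EuclideanDomain.gcd N H ∣ P^r * W₁ := by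
      rw [← hW, show P * w = N - (X+1)*H by rw [hN]; ring]
      exact dvd_sub hdN (hdH.mul_left _)
    exact dvd_of_dvd_dvd_coprime (hH ▸ hdH) hdw hco
  · apply EuclideanDomain.dvd_gcd
    · rw [hN, hH, hW]
      exact dvd_add (Dvd.dvd.mul_left (Dvd.intro _ rfl) _) (Dvd.intro _ rfl)
    · rw [hH]; exact Dvd.intro _ rfl

theorem helper (i j : ℕ) (hi : 0 < i) (hj : 0 < j) (hij : i ≤ j) :
    EuclideanDomain.gcd
      (X ^ (2^i + 2^j + 1) + X ^ (2^i + 2^j) + X ^ (2^i) + X ^ (2^j) + X : R)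
      (X ^ (2^i + 2^j) + X ^ (2^i + 1) + X ^ (2^j + 1) + X + 1) = (X^2+X+1) ^ rA i j := by
  have hN := NA_eq (2^i) (2^j)
  have hHP : (X ^ (2^i + 2^j) + X ^ (2^i + 1) + X ^ (2^j + 1) + X + 1 : R)
      = (X^2+X+1)^(2^i) + (X^(2^i) + X) * (X^(2^i) + X^(2^j) + 1) := by
    rw [P_pow i]; exact HA_eq (2^i) (2^j)
  have hHP' : (X ^ (2^i + 2^j) + X ^ (2^i + 1) + X ^ (2^j + 1) + X + 1 : R)
      = (X^2+X+1)^(2^j) + (X^(2^j) + X) * (X^(2^i) + X^(2^j) + 1) := by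
    rw [P_pow j]; exact HA_eq' (2^i) (2^j)
  rcases Nat.even_or_odd i with hie | hio <;> rcases Nat.even_or_odd j with hje | hjo
  · -- both even, r = 1
    have hrA : rA i j = 1 := by
      rw [rA, if_neg (fun h => (Nat.not_odd_iff_even.mpr hie) h.1), if_pos ⟨hie, hje⟩]
    rw [hrA]
    obtain ⟨m, hm⟩ : ∃ m, j = i + 2*m := by
      obtain ⟨a, ha⟩ := hie; obtain ⟨b, hb⟩ := hje
      exact ⟨b - a, by omega⟩
    have hPw : ¬ (X^2+X+1 : R) ∣ X^(2^i) + X^(2^j) + 1 := by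
      rw [hm]; exact w_not_dvd_eq i m
    obtain ⟨u₁, hu₁, hPu₁⟩ := exists_u1 hi hie
    obtain ⟨s, hs⟩ : ∃ s, 2^i = s + 1 :=
      ⟨2^i - 1, by have := Nat.one_le_two_pow (n := i); omega⟩
    have hH1 : (X ^ (2^i + 2^j) + X ^ (2^i + 1) + X ^ (2^j + 1) + X + 1 : R)
        = (X^2+X+1)^1 * ((X^2+X+1)^s + (X^(2^i) + X^(2^j) + 1) * u₁) := by
      rw [hHP, hu₁, hs]; ring
    have hco : IsCoprime ((X^2+X+1 : R)^s + (X^(2^i) + X^(2^j) + 1) * u₁)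
        (X^(2^i) + X^(2^j) + 1) := by
      have h1 : IsCoprime (X^(2^i) + X^(2^j) + 1 : R) (X^2+X+1) :=
        ((prime_P.coprime_iff_not_dvd).mpr hPw).symm
      exact (coprime_add_mul (c := u₁) (h1.pow_right)).symm
    exact core hN hH1 (by rw [pow_one]) hco
  · -- i even, j odd : r = 2^i
    have hij' : i < j := by
      rcases Nat.lt_or_ge i j with h | h
      · exact h
      · exfalso; have : i = j := le_antisymm hij h
        rw [this] at hie; exact (Nat.not_odd_iff_even.mpr hie) hjo
    have hrA : rA i j = 2^i := by
      rw [rA, if_neg (fun h => (Nat.not_odd_iff_even.mpr hie) h.1),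
        if_neg (fun h => (Nat.not_odd_iff_even.mpr h.2) hjo), if_pos hie,
        if_pos (Nat.pow_le_pow_right (by norm_num) hij)]
    rw [hrA]
    obtain ⟨m, hm⟩ : ∃ m, j = i + (2*m+1) := by
      obtain ⟨a, ha⟩ := hie; obtain ⟨b, hb⟩ := hjo
      exact ⟨b - a, by omega⟩
    obtain ⟨w₁, hw₁, hPw₁⟩ : ∃ w₁ : R,
        (X^(2^i) + X^(2^j) + 1 : R) = (X^2+X+1)^(2^i) * w₁ ∧ ¬ (X^2+X+1 : R) ∣ w₁ := by
      rw [hm]; exact w_factor_opp i m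
    obtain ⟨u₁, hu₁, _⟩ := exists_u1 hi hie
    have hH1 : (X ^ (2^i + 2^j) + X ^ (2^i + 1) + X ^ (2^j + 1) + X + 1 : R)
        = (X^2+X+1)^(2^i) * (1 + ((X^2+X+1) * w₁) * u₁) := by
      rw [hHP, hu₁, hw₁]; ring
    have hW : (X^2+X+1 : R) * (X^(2^i) + X^(2^j) + 1)
        = (X^2+X+1)^(2^i) * ((X^2+X+1) * w₁) := by
      rw [hw₁]; ring
    exact core hN hH1 hW ⟨1, -u₁, by ring⟩
  · -- i odd, j even : r = 2^i + 1
    have hij' : i < j := by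
      rcases Nat.lt_or_ge i j with h | h
      · exact h
      · exfalso; have : i = j := le_antisymm hij h
        rw [this] at hio; exact (Nat.not_odd_iff_even.mpr hje) hio
    have hlt : (2:ℕ)^i < 2^j := Nat.pow_lt_pow_right (by norm_num) hij'
    have hrA : rA i j = 2^i + 1 := by
      rw [rA, if_neg (fun h => (Nat.not_odd_iff_even.mpr hje) h.2),
        if_neg (fun h => (Nat.not_odd_iff_even.mpr h.1) hio),
        if_neg (Nat.not_even_iff_odd.mpr hio), if_pos hlt]
    rw [hrA]
    obtain ⟨m, hm⟩ : ∃ m, j = i + (2*m+1) := by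
      obtain ⟨a, ha⟩ := hio; obtain ⟨b, hb⟩ := hje
      exact ⟨b - a - 1, by omega⟩
    obtain ⟨w₁, hw₁, hPw₁⟩ : ∃ w₁ : R,
        (X^(2^i) + X^(2^j) + 1 : R) = (X^2+X+1)^(2^i) * w₁ ∧ ¬ (X^2+X+1 : R) ∣ w₁ := by
      rw [hm]; exact w_factor_opp i m
    obtain ⟨v₁, hv₁, _⟩ := exists_u1 hj hje
    obtain ⟨s, hs⟩ : ∃ s, 2^j = (2^i + 1) + s := by
      refine ⟨2^j - 2^i - 1, ?_⟩
      have h1 : (2:ℕ)^(i+1) ≤ 2^j := Nat.pow_le_pow_right (by norm_num) (by omega)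
      have h2 : (2:ℕ)^(i+1) = 2^i + 2^i := by rw [pow_succ]; ring
      have h3 : (1:ℕ) ≤ 2^i := Nat.one_le_two_pow
      omega
    have hH1 : (X ^ (2^i + 2^j) + X ^ (2^i + 1) + X ^ (2^j + 1) + X + 1 : R)
        = (X^2+X+1)^(2^i + 1) * ((X^2+X+1)^s + w₁ * v₁) := by
      rw [hHP', hv₁, hw₁, hs]; ring
    have hW : (X^2+X+1 : R) * (X^(2^i) + X^(2^j) + 1)
        = (X^2+X+1)^(2^i + 1) * w₁ := by
      rw [hw₁]; ring
    have hco : IsCoprime ((X^2+X+1 : R)^s + w₁ * v₁) w₁ := by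
      have h1 : IsCoprime (w₁ : R) (X^2+X+1) :=
        ((prime_P.coprime_iff_not_dvd).mpr hPw₁).symm
      exact (coprime_add_mul (c := v₁) (h1.pow_right)).symm
    exact core hN hH1 hW hco
  · -- both odd, r = 0
    have hrA : rA i j = 0 := by rw [rA, if_pos ⟨hio, hjo⟩]
    rw [hrA]
    obtain ⟨m, hm⟩ : ∃ m, j = i + 2*m := by
      obtain ⟨a, ha⟩ := hio; obtain ⟨b, hb⟩ := hjo
      exact ⟨b - a, by omega⟩
    have hPw : ¬ (X^2+X+1 : R) ∣ X^(2^i) + X^(2^j) + 1 := by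
      rw [hm]; exact w_not_dvd_eq i m
    have hPu : ¬ (X^2+X+1 : R) ∣ X^(2^i) + X := not_P_dvd_u_odd hio
    have hPH : ¬ (X^2+X+1 : R) ∣
        (X ^ (2^i + 2^j) + X ^ (2^i + 1) + X ^ (2^j + 1) + X + 1) := by
      intro h
      have hP1 : (X^2+X+1 : R) ∣ (X^2+X+1)^(2^i) :=
        dvd_pow_self _ (by positivity : (0:ℕ) < 2^i).ne'
      have huw : (X^2+X+1 : R) ∣ (X^(2^i) + X) * (X^(2^i) + X^(2^j) + 1) := by
        have heq : ((X^(2^i) + X) * (X^(2^i) + X^(2^j) + 1) : R)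
            = (X ^ (2^i + 2^j) + X ^ (2^i + 1) + X ^ (2^j + 1) + X + 1)
              - (X^2+X+1)^(2^i) := by
          rw [hHP]; ring
        rw [heq]; exact dvd_sub h hP1
      rcases (prime_P.dvd_mul).mp huw with h' | h'
      · exact hPu h'
      · exact hPw h'
    have hco : IsCoprime
        (X ^ (2^i + 2^j) + X ^ (2^i + 1) + X ^ (2^j + 1) + X + 1 : R)
        ((X^2+X+1) * (X^(2^i) + X^(2^j) + 1)) := by
      have hHp : IsCoprime
          (X ^ (2^i + 2^j) + X ^ (2^i + 1) + X ^ (2^j + 1) + X + 1 : R) (X^2+X+1) :=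
        ((prime_P.coprime_iff_not_dvd).mpr hPH).symm
      have h1 : IsCoprime (X^(2^i) + X^(2^j) + 1 : R) (X^2+X+1) :=
        ((prime_P.coprime_iff_not_dvd).mpr hPw).symm
      have hH' : (X ^ (2^i + 2^j) + X ^ (2^i + 1) + X ^ (2^j + 1) + X + 1 : R)
          = (X^2+X+1)^(2^i) + (X^(2^i) + X^(2^j) + 1) * (X^(2^i) + X) := by
        rw [hHP]; ring
      have h2 : IsCoprime (X^(2^i) + X^(2^j) + 1 : R)
          ((X^2+X+1)^(2^i) + (X^(2^i) + X^(2^j) + 1) * (X^(2^i) + X)) :=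
        coprime_add_mul (h1.pow_right)
      rw [← hH'] at h2
      exact hHp.mul_right h2.symm
    exact core hN (by rw [pow_zero, one_mul]) (by rw [pow_zero, one_mul]) hco

lemma rA_symm (i j : ℕ) : rA i j = rA j i := by
  unfold rA
  rcases Nat.even_or_odd i with hi | hi <;> rcases Nat.even_or_odd j with hj | hj
  · simp [hi, hj, Nat.not_odd_iff_even.mpr hi, Nat.not_odd_iff_even.mpr hj]
  · -- Even i, Odd j
    simp only [hi, hj, Nat.not_odd_iff_even.mpr hi, Nat.not_even_iff_odd.mpr hj,
      false_and, and_false, if_false, if_true, if_neg, not_false_eq_true, ite_true, ite_false]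
    rcases le_or_gt (2^i : ℕ) (2^j) with h | h
    · rw [if_pos h, if_neg (Nat.not_lt.mpr h)]
    · rw [if_neg (Nat.not_le.mpr h), if_pos h]
  · -- Odd i, Even j
    simp only [hi, hj, Nat.not_even_iff_odd.mpr hi, Nat.not_odd_iff_even.mpr hj,
      false_and, and_false, if_false, if_true, if_neg, not_false_eq_true, ite_true, ite_false]
    rcases lt_or_ge (2^i : ℕ) (2^j) with h | h
    · rw [if_pos h, if_neg (Nat.not_le.mpr h)]
    · rw [if_neg (Nat.not_lt.mpr h), if_pos h]
  · simp [hi, hj]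

end GcdNAHAAux

/-- In `F_2[x]`, the (monic) gcd of `N_A` and `H_A` equals `(x^2 + x + 1)^{r_A}`.
(Over `F_2` every nonzero polynomial has leading coefficient `1`, so the
Euclidean gcd is automatically the monic gcd.) -/
theorem gcd_NA_HA
    (i j : ℕ) (hi : 0 < i) (hj : 0 < j)
    (Q1 Q2 : ℕ) (hQ1 : Q1 = 2 ^ i) (hQ2 : Q2 = 2 ^ j)
    (NA HA : Polynomial (ZMod 2))
    (hNA : NA = X ^ (Q1 + Q2 + 1) + X ^ (Q1 + Q2) + X ^ Q1 + X ^ Q2 + X)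
    (hHA : HA = X ^ (Q1 + Q2) + X ^ (Q1 + 1) + X ^ (Q2 + 1) + X + 1) :
    EuclideanDomain.gcd NA HA = (X ^ 2 + X + 1) ^ rA i j := by
  subst hQ1 hQ2 hNA hHA
  rcases le_or_gt i j with h | h
  · exact GcdNAHAAux.helper i j hi hj h
  · have h1 := GcdNAHAAux.helper j i hj hi h.le
    rw [GcdNAHAAux.rA_symm i j]
    rw [show (X ^ (2^i + 2^j + 1) + X ^ (2^i + 2^j) + X ^ (2^i) + X ^ (2^j) + X
          : Polynomial (ZMod 2))
        = X ^ (2^j + 2^i + 1) + X ^ (2^j + 2^i) + X ^ (2^j) + X ^ (2^i) + X by ring,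
      show (X ^ (2^i + 2^j) + X ^ (2^i + 1) + X ^ (2^j + 1) + X + 1 : Polynomial (ZMod 2))
        = X ^ (2^j + 2^i) + X ^ (2^j + 1) + X ^ (2^i + 1) + X + 1 by ring]
    exact h1
end

section
/- In the polynomial ring F_2[x], the monic greatest common divisor of N_B(x) and H_B(x) equals (x^2 + x + 1)^{r_B}. -/
open Polynomial

local notation "R2" => Polynomial (ZMod 2)
local notation "PB" => ((X:R2)^2 + X + 1)

private lemma two_eq_zero : (2 : R2) = 0 := by
  have h := CharP.cast_eq_zero R2 2
  simpa using h

private lemma assoc_eq {f g : R2} (h : Associated f g) : f = g := by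
  obtain ⟨u, hu⟩ := h
  obtain ⟨r, hr, hru⟩ := Polynomial.isUnit_iff.mp u.isUnit
  have hr1 : r = 1 := by
    have h1 : ∀ s : ZMod 2, s ≠ 0 → s = 1 := by decide
    exact h1 r hr.ne_zero
  rw [← hu, ← hru, hr1, map_one, mul_one]

private lemma X3 : PB * (X + 1) = X^3 + 1 := by
  linear_combination ((X:R2)^2+X) * two_eq_zero

private lemma Xe_dvd (e b t : ℕ) : ((X:R2)^e + 1) ∣ X^(b + e*t) + X^b := by
  have h := sub_dvd_pow_sub_pow ((X:R2)^e) 1 t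
  rw [one_pow, ← pow_mul] at h
  rw [CharTwo.sub_eq_add, CharTwo.sub_eq_add] at h
  have h2 : (X:R2)^(b + e*t) + X^b = X^b * (X^(e*t) + 1) := by
    rw [pow_add]; ring
  rw [h2]
  exact h.mul_left _

private lemma P_dvd_X3 : PB ∣ ((X:R2)^3 + 1) := ⟨X+1, X3.symm⟩

private lemma P_dvd_X3k (b t : ℕ) : PB ∣ (X:R2)^(b + 3*t) + X^b :=
  dvd_trans P_dvd_X3 (Xe_dvd 3 b t)

private lemma P_pair {a b : ℕ} (h : a % 3 = b % 3) : PB ∣ (X:R2)^a + X^b := by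
  rcases le_total b a with hab | hab
  · have h3 : 3 ∣ a - b := (Nat.modEq_iff_dvd' hab).mp h.symm
    obtain ⟨t, ht⟩ := h3
    have : a = b + 3*t := by omega
    rw [this]; exact P_dvd_X3k b t
  · have h3 : 3 ∣ b - a := (Nat.modEq_iff_dvd' hab).mp h
    obtain ⟨t, ht⟩ := h3
    have : b = a + 3*t := by omega
    rw [this, add_comm ((X:R2)^a)]; exact P_dvd_X3k a t

private lemma Ppow_dvd (s b t : ℕ) : (PB)^(2^s) ∣ (X:R2)^(b + 3*2^s*t) + X^b := by
  have h1 : (PB)^(2^s) ∣ (X:R2)^(3*2^s) + 1 := by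
    have h2 : ((X:R2)^3 + 1)^(2^s) = X^(3*2^s) + 1 := by
      rw [add_pow_char_pow, one_pow, ← pow_mul]
    exact h2 ▸ pow_dvd_pow_of_dvd P_dvd_X3 _
  exact h1.trans (Xe_dvd (3*2^s) b t)

private lemma P_pow_eq (s : ℕ) : (PB)^(2^s) = X^(2*2^s) + X^(2^s) + 1 := by
  have h1 : ((X:R2)^2 + X + 1)^(2^s) = ((X:R2)^2+X)^(2^s) + 1^(2^s) :=
    add_pow_char_pow _ _ 2 s
  have h2 : ((X:R2)^2+X)^(2^s) = ((X:R2)^2)^(2^s) + X^(2^s) :=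
    add_pow_char_pow _ _ 2 s
  rw [h1, h2, one_pow, ← pow_mul]

private lemma P_irr : Irreducible (PB) := by
  have hdeg : (PB).natDegree = 2 := by compute_degree!
  rw [Polynomial.irreducible_iff_roots_eq_zero_of_degree_le_three (by omega) (by omega)]
  apply Multiset.eq_zero_of_forall_notMem
  intro a ha
  have h2 := (Polynomial.mem_roots'.mp ha).2
  simp only [IsRoot, eval_add, eval_pow, eval_X, eval_one] at h2
  have h1 : ∀ a : ZMod 2, ¬ (a^2+a+1 = 0) := by decide
  exact h1 a h2

private lemma P_prime : Prime (PB) := P_irr.prime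

private lemma cop_of_dvd {a b d : R2} (h : IsCoprime a b) (hd : d ∣ b) : IsCoprime a d := by
  obtain ⟨u, v, huv⟩ := h
  obtain ⟨k, rfl⟩ := hd
  exact ⟨u, v * k, by rw [← huv]; ring⟩

private lemma nat_even_pow (k : ℕ) : ∃ t, 2^(2*k) = 1 + 3*t := by
  induction k with
  | zero => exact ⟨0, rfl⟩
  | succ k ih =>
      obtain ⟨t, ht⟩ := ih
      exact ⟨1 + 4*t, by rw [Nat.mul_succ, pow_add, ht]; ring⟩

private lemma nat_odd_pow (k : ℕ) : ∃ t, 2^(2*k+1) = 2 + 3*t := by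
  obtain ⟨t, ht⟩ := nat_even_pow k
  exact ⟨2*t, by rw [pow_add, ht]; ring⟩

private lemma nat_mod6 (k : ℕ) : ∃ t, 2^(2*k+2) = 4 + 6*t := by
  obtain ⟨t, ht⟩ := nat_even_pow k
  exact ⟨2*t, by rw [pow_add, ht]; ring⟩

private lemma gcd_eq_pow {A B : R2} {r : ℕ} (h1 : (PB)^r ∣ A) (h2 : (PB)^r ∣ B)
    (h3 : EuclideanDomain.gcd A B ∣ (PB)^r) : EuclideanDomain.gcd A B = (PB)^r :=
  assoc_eq (associated_of_dvd_dvd h3 (EuclideanDomain.dvd_gcd h1 h2))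

private lemma dvd_pow_pred {d f : R2} {r : ℕ} (hd : d ∣ (PB)^(r+1)) (hf : d ∣ f)
    (hnot : ¬ (PB)^(r+1) ∣ f) : d ∣ (PB)^r := by
  obtain ⟨k, hk, hassoc⟩ := (dvd_prime_pow P_prime _).mp hd
  have hk' : k ≤ r := by
    by_contra hcon
    have hkr : k = r + 1 := by omega
    subst hkr
    exact hnot (hassoc.symm.dvd.trans hf)
  exact hassoc.dvd.trans (pow_dvd_pow _ hk')

private lemma hb_eq {HB c : R2} {n : ℕ} (hZ : c ∣ HB + (PB)^n) :
    ∃ Z, HB = (PB)^n + c * Z := by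
  obtain ⟨Z, hZ⟩ := hZ
  exact ⟨Z, by linear_combination hZ - (PB)^n * two_eq_zero⟩

private lemma cop_case0 {HB d : R2} {n m : ℕ}
    (hd1 : d ∣ HB) (hd2 : d ∣ PB * ((X:R2)^m+1)^n)
    (hPc : ¬ PB ∣ ((X:R2)^m+1)) (hZc : ((X:R2)^m+1) ∣ HB + (PB)^n) :
    d ∣ PB := by
  obtain ⟨Z, hHB⟩ := hb_eq hZc
  have hcopPc : IsCoprime (PB) ((X:R2)^m+1) := P_irr.coprime_iff_not_dvd.mpr hPc
  have hcopcHB : IsCoprime ((X:R2)^m+1) HB := by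
    rw [hHB]; exact (hcopPc.symm.pow_right).add_mul_left_right Z
  have hcop : IsCoprime d (((X:R2)^m+1)^n) := ((cop_of_dvd hcopcHB hd1).symm).pow_right
  exact hcop.dvd_of_dvd_mul_right hd2

private lemma cop_case1 {HB d : R2} {n m : ℕ} {c₁ : R2}
    (hd1 : d ∣ HB) (hd2 : d ∣ PB * ((X:R2)^m+1)^n)
    (hc1 : ((X:R2)^m+1) = PB * c₁) (hPc1 : ¬ PB ∣ c₁)
    (hZc : ((X:R2)^m+1) ∣ HB + (PB)^n) :
    d ∣ (PB)^(n+1) := by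
  obtain ⟨Z, hHB⟩ := hb_eq hZc
  have hcopPc1 : IsCoprime (PB) c₁ := P_irr.coprime_iff_not_dvd.mpr hPc1
  have hcopc1HB : IsCoprime c₁ HB := by
    rw [hHB, hc1]
    have h0 : (PB)^n + PB * c₁ * Z = (PB)^n + c₁ * (PB * Z) := by ring
    rw [h0]
    exact (hcopPc1.symm.pow_right).add_mul_left_right _
  have hcop : IsCoprime d (c₁^n) := ((cop_of_dvd hcopc1HB hd1).symm).pow_right
  have hd2' : d ∣ (PB)^(n+1) * c₁^n := by
    have h0 : PB * (((X:R2)^m+1))^n = (PB)^(n+1) * c₁^n := by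
      rw [hc1, mul_pow]; ring
    rwa [h0] at hd2
  exact hcop.dvd_of_dvd_mul_right hd2'




private lemma not_dvd_of_succ {W : R2} (h1 : PB ∣ W + 1) : ¬ PB ∣ W := by
  intro h
  have h2 : (1:R2) = (W+1) + W := by linear_combination -W * two_eq_zero
  have h3 : PB ∣ (W+1)+W := dvd_add h1 h
  rw [← h2] at h3
  exact P_irr.not_isUnit (isUnit_of_dvd_one h3)

private lemma PdvdW {n u : ℕ} (h : n = 2+3*u) :
    PB ∣ ((X:R2)^(3*n)+X^(2*n+1)+X^(2*n)+X^(n+1)+1) := by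
  have key : ((X:R2)^(3*n)+X^(2*n+1)+X^(2*n)+X^(n+1)+1)
      = ((X^(3*n)+X^(n+1)) + (X^(2*n+1)+X^2) + (X^(2*n)+X^1)) + (X^2+X+1) := by
    linear_combination (-((X:R2)^2+X)) * two_eq_zero
  rw [key]
  exact dvd_add (dvd_add (dvd_add (P_pair (by omega)) (P_pair (by omega)))
    (P_pair (by omega))) dvd_rfl

private lemma PnotW {n u : ℕ} (h : n = 1+3*u) :
    ¬ PB ∣ ((X:R2)^(3*n)+X^(2*n+1)+X^(2*n)+X^(n+1)+1) := by
  apply not_dvd_of_succ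
  have key : ((X:R2)^(3*n)+X^(2*n+1)+X^(2*n)+X^(n+1)+1) + 1
      = (X^(3*n)+X^(2*n+1)) + (X^(2*n)+X^(n+1)) := by
    linear_combination (1:R2) * two_eq_zero
  rw [key]
  exact dvd_add (P_pair (by omega)) (P_pair (by omega))

private lemma PdvdW2 {n u : ℕ} (h : n = 1+3*u) :
    PB ∣ ((X:R2)^(3*n)+X^(2*n+1)+X^(n+1)+X^n+1) := by
  have key : ((X:R2)^(3*n)+X^(2*n+1)+X^(n+1)+X^n+1)
      = ((X^(3*n)+X^(2*n+1)) + (X^(n+1)+X^2) + (X^n+X^1)) + (X^2+X+1) := by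
    linear_combination (-((X:R2)^2+X)) * two_eq_zero
  rw [key]
  exact dvd_add (dvd_add (dvd_add (P_pair (by omega)) (P_pair (by omega)))
    (P_pair (by omega))) dvd_rfl

private lemma PnotW2 {n u : ℕ} (h : n = 2+3*u) :
    ¬ PB ∣ ((X:R2)^(3*n)+X^(2*n+1)+X^(n+1)+X^n+1) := by
  apply not_dvd_of_succ
  have key : ((X:R2)^(3*n)+X^(2*n+1)+X^(n+1)+X^n+1) + 1
      = (X^(3*n)+X^(n+1)) + (X^(2*n+1)+X^n) := by
    linear_combination (1:R2) * two_eq_zero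
  rw [key]
  exact dvd_add (P_pair (by omega)) (P_pair (by omega))
/-- The integer `r_B`. -/
def rB (i j : ℕ) : ℕ :=
  if Odd i ∧ Even j then 0
  else if Even i ∧ Odd j then 1
  else if Even i then  -- i even, j even
    (if 2 ^ i ≤ 2 ^ j then 2 ^ i else 2 ^ j + 1)
  else  -- i odd, j odd
    (if 2 ^ i < 2 ^ j then 2 ^ i + 1 else 2 ^ j)

set_option maxHeartbeats 2000000 in
/-- In `F_2[x]`, the (monic) gcd of `N_B` and `H_B` equals `(x^2 + x + 1)^{r_B}`.
(Over `F_2` every nonzero polynomial has leading coefficient `1`, so the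
Euclidean gcd is automatically the monic gcd.) -/
theorem gcd_NB_HB
    (i j : ℕ) (hi : 0 < i) (hj : 0 < j)
    (Q1 Q2 : ℕ) (hQ1 : Q1 = 2 ^ i) (hQ2 : Q2 = 2 ^ j)
    (NB HB : Polynomial (ZMod 2))
    (hNB : NB = X ^ (Q1 + Q2 + 1) + X ^ (Q2 + 1) + X ^ Q1 + X ^ Q2 + X)
    (hHB : HB = X ^ (Q1 + Q2) + X ^ (Q1 + 1) + X ^ Q1 + X ^ (Q2 + 1) + 1) :
    EuclideanDomain.gcd NB HB = (X ^ 2 + X + 1) ^ rB i j := by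
  subst hQ1 hQ2
  have hQ1pos : (1:ℕ) ≤ 2^i := Nat.one_le_two_pow
  have hQ2pos : (1:ℕ) ≤ 2^j := Nat.one_le_two_pow
  set d := EuclideanDomain.gcd NB HB with hdDef
  have hdN : d ∣ NB := EuclideanDomain.gcd_dvd_left _ _
  have hdH : d ∣ HB := EuclideanDomain.gcd_dvd_right _ _
  have hNBeq : NB = X * HB + PB * ((X:R2)^(2^i) + X^(2^j)) := by
    rw [hNB, hHB]
    linear_combination (-((X:R2)^(2^i+2) + X^(2^i+1) + X^(2^j+2))) * two_eq_zero
  have hd2 : d ∣ PB * ((X:R2)^(2^i) + X^(2^j)) := by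
    have h : PB * ((X:R2)^(2^i) + X^(2^j)) = NB + X * HB := by
      rw [hNBeq]; linear_combination (-(X*HB)) * two_eq_zero
    rw [h]; exact dvd_add hdN (hdH.mul_left X)
  have hcopX : IsCoprime (X:R2) HB := by
    refine Polynomial.irreducible_X.coprime_iff_not_dvd.mpr ?_
    intro hdvd
    rw [hHB, Polynomial.X_dvd_iff] at hdvd
    simp only [coeff_add, coeff_X_pow, coeff_one] at hdvd
    rw [if_neg (by omega), if_neg (by omega), if_neg (by omega), if_neg (by omega)] at hdvd
    norm_num at hdvd
  rcases Nat.lt_trichotomy i j with hij | hij | hij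
  · -- i < j
    have hpow1 : (2:ℕ)^1 ≤ 2^(j-i) := Nat.pow_le_pow_right (by norm_num) (by omega)
    obtain ⟨B, hB⟩ : ∃ B, 2^(j-i) = B + 1 := ⟨2^(j-i) - 1, by omega⟩
    have hB1 : 1 ≤ B := by omega
    have hMeq2 : (2:ℕ)^j = 2^i * 2^(j-i) := by rw [← pow_add]; congr 1; omega
    have hMeq : (2:ℕ)^j = 2^i * (B+1) := by rw [hMeq2, hB]
    have hSplit : (X:R2)^(2^i) + X^(2^j) = X^(2^i) * (((X:R2)^B+1)^(2^i)) := by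
      have h1 : ((X:R2)^B+1)^(2^i) = X^(B*2^i) + 1 := by
        rw [add_pow_char_pow _ _ 2 i, one_pow, ← pow_mul]
      rw [h1]
      have h2 : (2:ℕ)^j = 2^i + B*2^i := by rw [hMeq]; ring
      rw [h2, pow_add]; ring
    have hd3 : d ∣ PB * (((X:R2)^B+1)^(2^i)) := by
      have hcopdX : IsCoprime d ((X:R2)^(2^i)) := ((cop_of_dvd hcopX hdH).symm).pow_right
      have h0 : PB * ((X:R2)^(2^i) + X^(2^j)) = X^(2^i) * (PB * ((X:R2)^B+1)^(2^i)) := by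
        rw [hSplit]; ring
      rw [h0] at hd2
      exact hcopdX.dvd_of_dvd_mul_left hd2
    have hZc : ((X:R2)^B+1) ∣ HB + (PB)^(2^i) := by
      have hp1 : ((X:R2)^B+1) ∣ X^(2^i+2^j) + X^(2*2^i) := by
        have e1 : (2:ℕ)^i+2^j = 2*2^i + B*2^i := by rw [hMeq]; ring
        rw [e1]; exact Xe_dvd B (2*2^i) (2^i)
      have hp2 : ((X:R2)^B+1) ∣ X^(2^j+1) + X^(2^i+1) := by
        have e2 : (2:ℕ)^j+1 = (2^i+1) + B*2^i := by rw [hMeq]; ring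
        rw [e2]; exact Xe_dvd B (2^i+1) (2^i)
      have hsum : HB + (PB)^(2^i)
          = ((X:R2)^(2^i+2^j) + X^(2*2^i)) + (X^(2^j+1)+X^(2^i+1)) := by
        rw [hHB, P_pow_eq i]
        linear_combination ((X:R2)^(2^i)+1) * two_eq_zero
      rw [hsum]; exact dvd_add hp1 hp2
    rcases Nat.even_or_odd (j - i) with hpar | hpar
    · -- j - i even : same parity
      obtain ⟨k, hk⟩ := hpar
      have hk1 : 1 ≤ k := by omega
      obtain ⟨u3, hu3⟩ : ∃ t, 2^(j-i) = 1+3*t := by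
        have h := nat_even_pow k; rwa [show 2*k = j - i by omega] at h
      have hPc : PB ∣ ((X:R2)^B+1) := by
        have e : ((X:R2)^B+1) = X^(0+3*u3) + X^0 := by
          rw [pow_zero]; congr 2; omega
        rw [e]; exact P_dvd_X3k 0 u3
      obtain ⟨c₁, hc1⟩ := hPc
      have hBodd : B % 2 = 1 := by
        have h2e : (2:ℕ)^(j-i) % 2 = 0 := by
          rcases Nat.exists_eq_succ_of_ne_zero (show j - i ≠ 0 by omega) with ⟨w, hw⟩
          rw [hw, pow_succ]; omega
        omega
      have hsq : Squarefree ((X:R2)^B+1) := by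
        apply Polynomial.Separable.squarefree
        rw [Polynomial.separable_def]
        have hder : derivative ((X:R2)^B+1) = X^(B-1) := by
          rw [derivative_add, derivative_one, derivative_X_pow, add_zero]
          have hm2 : ((B:ℕ) : ZMod 2) = 1 := by
            have h := ZMod.natCast_mod B 2
            rw [hBodd] at h
            simpa using h.symm
          rw [hm2, map_one, one_mul]
        rw [hder]
        refine ⟨1, X, ?_⟩
        have hx : (X:R2) * X^(B-1) = X^B := by
          rw [← pow_succ']; congr 1; omega
        rw [one_mul, hx]
        linear_combination (X:R2)^B * two_eq_zero
      have hPc1 : ¬ PB ∣ c₁ := by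
        intro hh
        obtain ⟨c₂, hc₂⟩ := hh
        refine P_irr.not_isUnit (hsq PB ⟨c₂, ?_⟩)
        rw [hc1, hc₂]; ring
      have hdP : d ∣ (PB)^(2^i+1) := cop_case1 hdH hd3 hc1 hPc1 hZc
      obtain ⟨t6, ht6⟩ : ∃ t, 2^(j-i) = 4 + 6*t := by
        have h := nat_mod6 (k-1)
        rwa [show 2*(k-1)+2 = j - i by omega] at h
      have hcong : (PB)^(2^(i+1)) ∣
          HB + ((X:R2)^(5*2^i) + X^(4*2^i+1) + X^(2^i+1) + X^(2^i) + 1) := by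
        have hp1 : (PB)^(2^(i+1)) ∣ (X:R2)^(2^i+2^j) + X^(5*2^i) := by
          have e1 : (2:ℕ)^i+2^j = 5*2^i + 3*2^(i+1)*t6 := by
            rw [hMeq2, ht6, pow_succ]; ring
          rw [e1]; exact Ppow_dvd (i+1) (5*2^i) t6
        have hp2 : (PB)^(2^(i+1)) ∣ (X:R2)^(2^j+1) + X^(4*2^i+1) := by
          have e2 : (2:ℕ)^j+1 = (4*2^i+1) + 3*2^(i+1)*t6 := by
            rw [hMeq2, ht6, pow_succ]; ring
          rw [e2]; exact Ppow_dvd (i+1) (4*2^i+1) t6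
        have hsum2 : HB + ((X:R2)^(5*2^i) + X^(4*2^i+1) + X^(2^i+1) + X^(2^i) + 1)
            = ((X:R2)^(2^i+2^j) + X^(5*2^i)) + (X^(2^j+1) + X^(4*2^i+1)) := by
          rw [hHB]
          linear_combination ((X:R2)^(2^i+1)+X^(2^i)+1) * two_eq_zero
        rw [hsum2]; exact dvd_add hp1 hp2
      have hGW : ((X:R2)^(5*2^i) + X^(4*2^i+1) + X^(2^i+1) + X^(2^i) + 1)
          = (PB)^(2^i) * ((X:R2)^(3*2^i)+X^(2*2^i+1)+X^(2*2^i)+X^(2^i+1)+1) := by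
        rw [P_pow_eq i]
        linear_combination
          (-((X:R2)^(4*2^i)+X^(3*2^i+1)+X^(3*2^i)+X^(2*2^i+1)+X^(2*2^i))) * two_eq_zero
      have hGdvd : (PB)^(2^i) ∣
          ((X:R2)^(5*2^i) + X^(4*2^i+1) + X^(2^i+1) + X^(2^i) + 1) := ⟨_, hGW⟩
      have hle1 : (2:ℕ)^i ≤ 2^(i+1) := Nat.pow_le_pow_right (by norm_num) (by omega)
      have h2i1 : (2:ℕ)^(i+1) = 2*2^i := by rw [pow_succ]; ring
      have hle2 : (2:ℕ)^i + 1 ≤ 2^(i+1) := by omega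
      have hHBn : (PB)^(2^i) ∣ HB := by
        have h1 := (pow_dvd_pow PB hle1).trans hcong
        have h2 : HB = (HB + ((X:R2)^(5*2^i) + X^(4*2^i+1) + X^(2^i+1) + X^(2^i) + 1))
            + ((X:R2)^(5*2^i) + X^(4*2^i+1) + X^(2^i+1) + X^(2^i) + 1) := by
          linear_combination
            (-((X:R2)^(5*2^i) + X^(4*2^i+1) + X^(2^i+1) + X^(2^i) + 1)) * two_eq_zero
        rw [h2]; exact dvd_add h1 hGdvd
      have hPNB : ∀ r : ℕ, r ≤ 2^i+1 → (PB)^r ∣ HB → (PB)^r ∣ NB := by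
        intro r hr hHBr
        rw [hNBeq]
        refine dvd_add (hHBr.mul_left X) ?_
        have h0 : PB * ((X:R2)^(2^i)+X^(2^j)) = (PB)^(2^i+1) * (X^(2^i) * c₁^(2^i)) := by
          rw [hSplit, hc1, mul_pow, pow_succ]; ring
        rw [h0]
        exact (pow_dvd_pow PB hr).mul_right _
      rcases Nat.even_or_odd i with hpi | hpi
      · -- i even (j even) : r = 2^i
        obtain ⟨ki, hki⟩ := hpi
        obtain ⟨u, hu⟩ : ∃ u, 2^i = 1 + 3*u := by
          have h := nat_even_pow ki; rwa [show 2*ki = i by omega] at h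
        have hPW := PnotW hu
        have hnot : ¬ (PB)^(2^i+1) ∣ HB := by
          intro hcon
          have h1 : (PB)^(2^i+1) ∣
              ((X:R2)^(5*2^i) + X^(4*2^i+1) + X^(2^i+1) + X^(2^i) + 1) := by
            have h2 : ((X:R2)^(5*2^i) + X^(4*2^i+1) + X^(2^i+1) + X^(2^i) + 1)
                = (HB + ((X:R2)^(5*2^i) + X^(4*2^i+1) + X^(2^i+1) + X^(2^i) + 1)) + HB := by
              linear_combination (-HB) * two_eq_zero
            rw [h2]; exact dvd_add ((pow_dvd_pow PB hle2).trans hcong) hcon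
          rw [hGW, pow_succ] at h1
          exact hPW ((mul_dvd_mul_iff_left (pow_ne_zero (2^i) P_irr.ne_zero)).mp h1)
        have hdr : d ∣ (PB)^(2^i) := dvd_pow_pred hdP hdH hnot
        have hjE : Even j := by
          rcases Nat.even_or_odd j with h | h
          · exact h
          · exfalso; rw [Nat.odd_iff] at h; omega
        have hiE : Even i := ⟨ki, hki⟩
        have hrB : rB i j = 2^i := by
          unfold rB
          rw [if_neg (fun h => Nat.not_odd_iff_even.mpr hiE h.1),
              if_neg (fun h => Nat.not_odd_iff_even.mpr hjE h.2),
              if_pos hiE,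
              if_pos (Nat.pow_le_pow_right (by norm_num) (by omega))]
        rw [hrB]
        exact gcd_eq_pow (hPNB _ (by omega) hHBn) hHBn hdr
      · -- i odd (j odd) : r = 2^i+1
        obtain ⟨ki, hki⟩ := hpi
        obtain ⟨u, hu⟩ : ∃ u, 2^i = 2 + 3*u := by
          have h := nat_odd_pow ki; rwa [show 2*ki+1 = i by omega] at h
        have hPW := PdvdW hu
        have hGdvd1 : (PB)^(2^i+1) ∣
            ((X:R2)^(5*2^i) + X^(4*2^i+1) + X^(2^i+1) + X^(2^i) + 1) := by
          rw [hGW, pow_succ]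
          exact mul_dvd_mul_left _ hPW
        have hHBn1 : (PB)^(2^i+1) ∣ HB := by
          have h2 : HB = (HB + ((X:R2)^(5*2^i) + X^(4*2^i+1) + X^(2^i+1) + X^(2^i) + 1))
              + ((X:R2)^(5*2^i) + X^(4*2^i+1) + X^(2^i+1) + X^(2^i) + 1) := by
            linear_combination
              (-((X:R2)^(5*2^i) + X^(4*2^i+1) + X^(2^i+1) + X^(2^i) + 1)) * two_eq_zero
          rw [h2]; exact dvd_add ((pow_dvd_pow PB hle2).trans hcong) hGdvd1
        have hjO : Odd j := by
          rcases Nat.even_or_odd j with h | h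
          · exfalso; rw [Nat.even_iff] at h; omega
          · exact h
        have hiO : Odd i := ⟨ki, by omega⟩
        have hrB : rB i j = 2^i + 1 := by
          unfold rB
          rw [if_neg (fun h => Nat.not_even_iff_odd.mpr hjO h.2),
              if_neg (fun h => Nat.not_even_iff_odd.mpr hiO h.1),
              if_neg (Nat.not_even_iff_odd.mpr hiO),
              if_pos (Nat.pow_lt_pow_right (by norm_num) (by omega))]
        rw [hrB]
        exact gcd_eq_pow (hPNB _ le_rfl hHBn1) hHBn1 hdP
    · -- j - i odd : mixed parity
      obtain ⟨kk, hkk⟩ := hpar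
      obtain ⟨u, hu⟩ : ∃ t, 2^(j-i) = 2 + 3*t := by
        have h := nat_odd_pow kk; rwa [show 2*kk+1 = j - i by omega] at h
      have hPc : ¬ PB ∣ ((X:R2)^B+1) := by
        intro hcon
        have h1 : PB ∣ (X:R2)^B + X^1 := P_pair (by omega)
        have h2 : PB ∣ ((X:R2) + 1) := by
          have e : ((X:R2)^B+1) + ((X:R2)^B+X^1) = (X:R2)+1 := by
            linear_combination ((X:R2)^B) * two_eq_zero
          rw [← e]; exact dvd_add hcon h1
        have h3 := Polynomial.natDegree_le_of_dvd h2 (by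
          have : ((X:R2) + 1) = X + C 1 := by rw [map_one]
          rw [this]; exact Polynomial.X_add_C_ne_zero 1)
        have h4 : (PB).natDegree = 2 := by compute_degree!
        have h5 : ((X:R2)+1).natDegree = 1 := by compute_degree!
        omega
      have hdP : d ∣ PB := cop_case0 hdH hd3 hPc hZc
      rcases Nat.even_or_odd i with hpi | hpi
      · -- i even, j odd : r = 1
        obtain ⟨ki, hki⟩ := hpi
        obtain ⟨u1, hu1⟩ : ∃ t, 2^i = 1 + 3*t := by
          have h := nat_even_pow ki; rwa [show 2*ki = i by omega] at h
        have hjO : Odd j := by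
          rcases Nat.even_or_odd j with h | h
          · exfalso; rw [Nat.even_iff] at h; omega
          · exact h
        obtain ⟨kj, hkj⟩ := hjO
        obtain ⟨u2, hu2⟩ : ∃ t, 2^j = 2 + 3*t := by
          have h := nat_odd_pow kj; rwa [show 2*kj+1 = j by omega] at h
        have hPHB : PB ∣ HB := by
          rw [hHB]
          have key : (X:R2)^(2^i+2^j) + X^(2^i+1) + X^(2^i) + X^(2^j+1) + 1
              = (((X:R2)^(2^i+2^j)+X^(2^j+1)) + (X^(2^i+1)+X^2) + (X^(2^i)+X^1))
                + (X^2+X+1) := by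
            linear_combination (-((X:R2)^2+X)) * two_eq_zero
          rw [key]
          exact dvd_add (dvd_add (dvd_add (P_pair (by omega)) (P_pair (by omega)))
            (P_pair (by omega))) dvd_rfl
        have hPNB : PB ∣ NB := by
          rw [hNBeq]
          exact dvd_add (hPHB.mul_left X) (dvd_mul_right _ _)
        have hiE : Even i := ⟨ki, hki⟩
        have hrB : rB i j = 1 := by
          unfold rB
          rw [if_neg (fun h => Nat.not_odd_iff_even.mpr hiE h.1),
              if_pos ⟨hiE, ⟨kj, hkj⟩⟩]
        rw [hrB, pow_one]
        exact assoc_eq (associated_of_dvd_dvd hdP (EuclideanDomain.dvd_gcd hPNB hPHB))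
      · -- i odd, j even : r = 0
        obtain ⟨ki, hki⟩ := hpi
        obtain ⟨u1, hu1⟩ : ∃ t, 2^i = 2 + 3*t := by
          have h := nat_odd_pow ki; rwa [show 2*ki+1 = i by omega] at h
        have hjE : Even j := by
          rcases Nat.even_or_odd j with h | h
          · exact h
          · exfalso; rw [Nat.odd_iff] at h; omega
        obtain ⟨kj, hkj⟩ := hjE
        obtain ⟨u2, hu2⟩ : ∃ t, 2^j = 1 + 3*t := by
          have h := nat_even_pow kj; rwa [show 2*kj = j by omega] at h
        have hPHB1 : PB ∣ HB + 1 := by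
          rw [hHB]
          have key : ((X:R2)^(2^i+2^j) + X^(2^i+1) + X^(2^i) + X^(2^j+1) + 1) + 1
              = ((X:R2)^(2^i+2^j)+X^(2^i+1)) + (X^(2^i)+X^(2^j+1)) := by
            linear_combination (1:R2) * two_eq_zero
          rw [key]
          exact dvd_add (P_pair (by omega)) (P_pair (by omega))
        have hnotHB : ¬ PB ∣ HB := not_dvd_of_succ hPHB1
        have hd0 : d ∣ (PB)^0 := by
          refine dvd_pow_pred ?_ hdH ?_
          · rw [zero_add, pow_one]; exact hdP
          · rw [zero_add, pow_one]; exact hnotHB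
        have hiO : Odd i := ⟨ki, by omega⟩
        have hrB : rB i j = 0 := by
          unfold rB
          rw [if_pos ⟨hiO, ⟨kj, hkj⟩⟩]
        rw [hrB]
        exact gcd_eq_pow (by rw [pow_zero]; exact one_dvd _)
          (by rw [pow_zero]; exact one_dvd _) hd0
  · -- i = j
    subst hij
    have hHBP : HB = (PB)^(2^i) := by
      rw [hHB, P_pow_eq i]
      linear_combination ((X:R2)^(2^i+1)) * two_eq_zero
    have hNBX : NB = X * HB := by
      rw [hNBeq]
      linear_combination (PB * (X:R2)^(2^i)) * two_eq_zero
    have hHBdN : HB ∣ NB := by rw [hNBX]; exact Dvd.dvd.mul_left dvd_rfl X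
    have hrB : rB i i = 2^i := by
      unfold rB
      rcases Nat.even_or_odd i with h | h
      · rw [if_neg (fun hx => Nat.not_odd_iff_even.mpr h hx.1),
            if_neg (fun hx => Nat.not_odd_iff_even.mpr h hx.2),
            if_pos h, if_pos le_rfl]
      · rw [if_neg (fun hx => Nat.not_even_iff_odd.mpr h hx.2),
            if_neg (fun hx => Nat.not_even_iff_odd.mpr h hx.1),
            if_neg (Nat.not_even_iff_odd.mpr h), if_neg (lt_irrefl _)]
    rw [hrB, ← hHBP]
    exact assoc_eq (associated_of_dvd_dvd hdH (EuclideanDomain.dvd_gcd hHBdN dvd_rfl))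
  · -- j < i
    have hpow1 : (2:ℕ)^1 ≤ 2^(i-j) := Nat.pow_le_pow_right (by norm_num) (by omega)
    obtain ⟨B, hB⟩ : ∃ B, 2^(i-j) = B + 1 := ⟨2^(i-j) - 1, by omega⟩
    have hB1 : 1 ≤ B := by omega
    have hMeq2 : (2:ℕ)^i = 2^j * 2^(i-j) := by rw [← pow_add]; congr 1; omega
    have hMeq : (2:ℕ)^i = 2^j * (B+1) := by rw [hMeq2, hB]
    have hSplit : (X:R2)^(2^i) + X^(2^j) = X^(2^j) * (((X:R2)^B+1)^(2^j)) := by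
      have h1 : ((X:R2)^B+1)^(2^j) = X^(B*2^j) + 1 := by
        rw [add_pow_char_pow _ _ 2 j, one_pow, ← pow_mul]
      rw [h1]
      have h2 : (2:ℕ)^i = 2^j + B*2^j := by rw [hMeq]; ring
      rw [h2, pow_add]; ring
    have hd3 : d ∣ PB * (((X:R2)^B+1)^(2^j)) := by
      have hcopdX : IsCoprime d ((X:R2)^(2^j)) := ((cop_of_dvd hcopX hdH).symm).pow_right
      have h0 : PB * ((X:R2)^(2^i) + X^(2^j)) = X^(2^j) * (PB * ((X:R2)^B+1)^(2^j)) := by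
        rw [hSplit]; ring
      rw [h0] at hd2
      exact hcopdX.dvd_of_dvd_mul_left hd2
    have hZc : ((X:R2)^B+1) ∣ HB + (PB)^(2^j) := by
      have hp1 : ((X:R2)^B+1) ∣ X^(2^i+2^j) + X^(2*2^j) := by
        have e1 : (2:ℕ)^i+2^j = 2*2^j + B*2^j := by rw [hMeq]; ring
        rw [e1]; exact Xe_dvd B (2*2^j) (2^j)
      have hp2 : ((X:R2)^B+1) ∣ X^(2^i+1) + X^(2^j+1) := by
        have e2 : (2:ℕ)^i+1 = (2^j+1) + B*2^j := by rw [hMeq]; ring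
        rw [e2]; exact Xe_dvd B (2^j+1) (2^j)
      have hp3 : ((X:R2)^B+1) ∣ X^(2^i) + X^(2^j) := by
        have e3 : (2:ℕ)^i = 2^j + B*2^j := by rw [hMeq]; ring
        rw [e3]; exact Xe_dvd B (2^j) (2^j)
      have hsum : HB + (PB)^(2^j)
          = (((X:R2)^(2^i+2^j) + X^(2*2^j)) + (X^(2^i+1)+X^(2^j+1)))
            + (X^(2^i) + X^(2^j)) := by
        rw [hHB, P_pow_eq j]
        linear_combination (1:R2) * two_eq_zero
      rw [hsum]; exact dvd_add (dvd_add hp1 hp2) hp3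
    rcases Nat.even_or_odd (i - j) with hpar | hpar
    · -- i - j even : same parity
      obtain ⟨k, hk⟩ := hpar
      have hk1 : 1 ≤ k := by omega
      obtain ⟨u3, hu3⟩ : ∃ t, 2^(i-j) = 1+3*t := by
        have h := nat_even_pow k; rwa [show 2*k = i - j by omega] at h
      have hPc : PB ∣ ((X:R2)^B+1) := by
        have e : ((X:R2)^B+1) = X^(0+3*u3) + X^0 := by
          rw [pow_zero]; congr 2; omega
        rw [e]; exact P_dvd_X3k 0 u3
      obtain ⟨c₁, hc1⟩ := hPc
      have hBodd : B % 2 = 1 := by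
        have h2e : (2:ℕ)^(i-j) % 2 = 0 := by
          rcases Nat.exists_eq_succ_of_ne_zero (show i - j ≠ 0 by omega) with ⟨w, hw⟩
          rw [hw, pow_succ]; omega
        omega
      have hsq : Squarefree ((X:R2)^B+1) := by
        apply Polynomial.Separable.squarefree
        rw [Polynomial.separable_def]
        have hder : derivative ((X:R2)^B+1) = X^(B-1) := by
          rw [derivative_add, derivative_one, derivative_X_pow, add_zero]
          have hm2 : ((B:ℕ) : ZMod 2) = 1 := by
            have h := ZMod.natCast_mod B 2
            rw [hBodd] at h
            simpa using h.symm
          rw [hm2, map_one, one_mul]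
        rw [hder]
        refine ⟨1, X, ?_⟩
        have hx : (X:R2) * X^(B-1) = X^B := by
          rw [← pow_succ']; congr 1; omega
        rw [one_mul, hx]
        linear_combination (X:R2)^B * two_eq_zero
      have hPc1 : ¬ PB ∣ c₁ := by
        intro hh
        obtain ⟨c₂, hc₂⟩ := hh
        refine P_irr.not_isUnit (hsq PB ⟨c₂, ?_⟩)
        rw [hc1, hc₂]; ring
      have hdP : d ∣ (PB)^(2^j+1) := cop_case1 hdH hd3 hc1 hPc1 hZc
      obtain ⟨t6, ht6⟩ : ∃ t, 2^(i-j) = 4 + 6*t := by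
        have h := nat_mod6 (k-1)
        rwa [show 2*(k-1)+2 = i - j by omega] at h
      have hcong : (PB)^(2^(j+1)) ∣
          HB + ((X:R2)^(5*2^j) + X^(4*2^j+1) + X^(4*2^j) + X^(2^j+1) + 1) := by
        have hp1 : (PB)^(2^(j+1)) ∣ (X:R2)^(2^i+2^j) + X^(5*2^j) := by
          have e1 : (2:ℕ)^i+2^j = 5*2^j + 3*2^(j+1)*t6 := by
            rw [hMeq2, ht6, pow_succ]; ring
          rw [e1]; exact Ppow_dvd (j+1) (5*2^j) t6
        have hp2 : (PB)^(2^(j+1)) ∣ (X:R2)^(2^i+1) + X^(4*2^j+1) := by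
          have e2 : (2:ℕ)^i+1 = (4*2^j+1) + 3*2^(j+1)*t6 := by
            rw [hMeq2, ht6, pow_succ]; ring
          rw [e2]; exact Ppow_dvd (j+1) (4*2^j+1) t6
        have hp3 : (PB)^(2^(j+1)) ∣ (X:R2)^(2^i) + X^(4*2^j) := by
          have e3 : (2:ℕ)^i = 4*2^j + 3*2^(j+1)*t6 := by
            rw [hMeq2, ht6, pow_succ]; ring
          rw [e3]; exact Ppow_dvd (j+1) (4*2^j) t6
        have hsum2 : HB + ((X:R2)^(5*2^j) + X^(4*2^j+1) + X^(4*2^j) + X^(2^j+1) + 1)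
            = (((X:R2)^(2^i+2^j) + X^(5*2^j)) + (X^(2^i+1) + X^(4*2^j+1)))
              + (X^(2^i) + X^(4*2^j)) := by
          rw [hHB]
          linear_combination ((X:R2)^(2^j+1)+1) * two_eq_zero
        rw [hsum2]; exact dvd_add (dvd_add hp1 hp2) hp3
      have hGW : ((X:R2)^(5*2^j) + X^(4*2^j+1) + X^(4*2^j) + X^(2^j+1) + 1)
          = (PB)^(2^j) * ((X:R2)^(3*2^j)+X^(2*2^j+1)+X^(2^j+1)+X^(2^j)+1) := by
        rw [P_pow_eq j]
        linear_combination
          (-((X:R2)^(3*2^j+1)+X^(3*2^j)+X^(2*2^j+1)+X^(2*2^j)+X^(2^j))) * two_eq_zero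
      have hGdvd : (PB)^(2^j) ∣
          ((X:R2)^(5*2^j) + X^(4*2^j+1) + X^(4*2^j) + X^(2^j+1) + 1) := ⟨_, hGW⟩
      have hle1 : (2:ℕ)^j ≤ 2^(j+1) := Nat.pow_le_pow_right (by norm_num) (by omega)
      have h2j1 : (2:ℕ)^(j+1) = 2*2^j := by rw [pow_succ]; ring
      have hle2 : (2:ℕ)^j + 1 ≤ 2^(j+1) := by omega
      have hHBn : (PB)^(2^j) ∣ HB := by
        have h1 := (pow_dvd_pow PB hle1).trans hcong
        have h2 : HB = (HB + ((X:R2)^(5*2^j) + X^(4*2^j+1) + X^(4*2^j) + X^(2^j+1) + 1))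
            + ((X:R2)^(5*2^j) + X^(4*2^j+1) + X^(4*2^j) + X^(2^j+1) + 1) := by
          linear_combination
            (-((X:R2)^(5*2^j) + X^(4*2^j+1) + X^(4*2^j) + X^(2^j+1) + 1)) * two_eq_zero
        rw [h2]; exact dvd_add h1 hGdvd
      have hPNB : ∀ r : ℕ, r ≤ 2^j+1 → (PB)^r ∣ HB → (PB)^r ∣ NB := by
        intro r hr hHBr
        rw [hNBeq]
        refine dvd_add (hHBr.mul_left X) ?_
        have h0 : PB * ((X:R2)^(2^i)+X^(2^j)) = (PB)^(2^j+1) * (X^(2^j) * c₁^(2^j)) := by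
          rw [hSplit, hc1, mul_pow, pow_succ]; ring
        rw [h0]
        exact (pow_dvd_pow PB hr).mul_right _
      rcases Nat.even_or_odd j with hpj | hpj
      · -- j even (i even) : r = 2^j + 1
        obtain ⟨kj, hkj⟩ := hpj
        obtain ⟨u, hu⟩ : ∃ u, 2^j = 1 + 3*u := by
          have h := nat_even_pow kj; rwa [show 2*kj = j by omega] at h
        have hPW := PdvdW2 hu
        have hGdvd1 : (PB)^(2^j+1) ∣
            ((X:R2)^(5*2^j) + X^(4*2^j+1) + X^(4*2^j) + X^(2^j+1) + 1) := by
          rw [hGW, pow_succ]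
          exact mul_dvd_mul_left _ hPW
        have hHBn1 : (PB)^(2^j+1) ∣ HB := by
          have h2 : HB = (HB + ((X:R2)^(5*2^j) + X^(4*2^j+1) + X^(4*2^j) + X^(2^j+1) + 1))
              + ((X:R2)^(5*2^j) + X^(4*2^j+1) + X^(4*2^j) + X^(2^j+1) + 1) := by
            linear_combination
              (-((X:R2)^(5*2^j) + X^(4*2^j+1) + X^(4*2^j) + X^(2^j+1) + 1)) * two_eq_zero
          rw [h2]; exact dvd_add ((pow_dvd_pow PB hle2).trans hcong) hGdvd1
        have hiE : Even i := ⟨kj + k, by omega⟩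
        have hrB : rB i j = 2^j + 1 := by
          unfold rB
          rw [if_neg (fun h => Nat.not_odd_iff_even.mpr hiE h.1),
              if_neg (fun h => Nat.not_odd_iff_even.mpr ⟨kj, hkj⟩ h.2),
              if_pos hiE,
              if_neg (not_le.mpr (Nat.pow_lt_pow_right (by norm_num) (by omega)))]
        rw [hrB]
        exact gcd_eq_pow (hPNB _ le_rfl hHBn1) hHBn1 hdP
      · -- j odd (i odd) : r = 2^j
        obtain ⟨kj, hkj⟩ := hpj
        obtain ⟨u, hu⟩ : ∃ u, 2^j = 2 + 3*u := by
          have h := nat_odd_pow kj; rwa [show 2*kj+1 = j by omega] at h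
        have hPW := PnotW2 hu
        have hnot : ¬ (PB)^(2^j+1) ∣ HB := by
          intro hcon
          have h1 : (PB)^(2^j+1) ∣
              ((X:R2)^(5*2^j) + X^(4*2^j+1) + X^(4*2^j) + X^(2^j+1) + 1) := by
            have h2 : ((X:R2)^(5*2^j) + X^(4*2^j+1) + X^(4*2^j) + X^(2^j+1) + 1)
                = (HB + ((X:R2)^(5*2^j) + X^(4*2^j+1) + X^(4*2^j) + X^(2^j+1) + 1)) + HB := by
              linear_combination (-HB) * two_eq_zero
            rw [h2]; exact dvd_add ((pow_dvd_pow PB hle2).trans hcong) hcon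
          rw [hGW, pow_succ] at h1
          exact hPW ((mul_dvd_mul_iff_left (pow_ne_zero (2^j) P_irr.ne_zero)).mp h1)
        have hdr : d ∣ (PB)^(2^j) := dvd_pow_pred hdP hdH hnot
        have hiO : Odd i := ⟨kj + k, by omega⟩
        have hjO : Odd j := ⟨kj, hkj⟩
        have hrB : rB i j = 2^j := by
          unfold rB
          rw [if_neg (fun h => Nat.not_even_iff_odd.mpr hjO h.2),
              if_neg (fun h => Nat.not_even_iff_odd.mpr hiO h.1),
              if_neg (Nat.not_even_iff_odd.mpr hiO),
              if_neg (not_lt.mpr (le_of_lt (Nat.pow_lt_pow_right (by norm_num) (by omega))))]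
        rw [hrB]
        exact gcd_eq_pow (hPNB _ (by omega) hHBn) hHBn hdr
    · -- i - j odd : mixed parity
      obtain ⟨kk, hkk⟩ := hpar
      obtain ⟨u, hu⟩ : ∃ t, 2^(i-j) = 2 + 3*t := by
        have h := nat_odd_pow kk; rwa [show 2*kk+1 = i - j by omega] at h
      have hPc : ¬ PB ∣ ((X:R2)^B+1) := by
        intro hcon
        have h1 : PB ∣ (X:R2)^B + X^1 := P_pair (by omega)
        have h2 : PB ∣ ((X:R2) + 1) := by
          have e : ((X:R2)^B+1) + ((X:R2)^B+X^1) = (X:R2)+1 := by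
            linear_combination ((X:R2)^B) * two_eq_zero
          rw [← e]; exact dvd_add hcon h1
        have h3 := Polynomial.natDegree_le_of_dvd h2 (by
          have hxc : ((X:R2) + 1) = X + C 1 := by rw [map_one]
          rw [hxc]; exact Polynomial.X_add_C_ne_zero 1)
        have h4 : (PB).natDegree = 2 := by compute_degree!
        have h5 : ((X:R2)+1).natDegree = 1 := by compute_degree!
        omega
      have hdP : d ∣ PB := cop_case0 hdH hd3 hPc hZc
      rcases Nat.even_or_odd i with hpi | hpi
      · -- i even, j odd : r = 1
        obtain ⟨ki, hki⟩ := hpi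
        obtain ⟨u1, hu1⟩ : ∃ t, 2^i = 1 + 3*t := by
          have h := nat_even_pow ki; rwa [show 2*ki = i by omega] at h
        have hjO : Odd j := by
          rcases Nat.even_or_odd j with h | h
          · exfalso; rw [Nat.even_iff] at h; omega
          · exact h
        obtain ⟨kj, hkj⟩ := hjO
        obtain ⟨u2, hu2⟩ : ∃ t, 2^j = 2 + 3*t := by
          have h := nat_odd_pow kj; rwa [show 2*kj+1 = j by omega] at h
        have hPHB : PB ∣ HB := by
          rw [hHB]
          have key : (X:R2)^(2^i+2^j) + X^(2^i+1) + X^(2^i) + X^(2^j+1) + 1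
              = (((X:R2)^(2^i+2^j)+X^(2^j+1)) + (X^(2^i+1)+X^2) + (X^(2^i)+X^1))
                + (X^2+X+1) := by
            linear_combination (-((X:R2)^2+X)) * two_eq_zero
          rw [key]
          exact dvd_add (dvd_add (dvd_add (P_pair (by omega)) (P_pair (by omega)))
            (P_pair (by omega))) dvd_rfl
        have hPNB : PB ∣ NB := by
          rw [hNBeq]
          exact dvd_add (hPHB.mul_left X) (dvd_mul_right _ _)
        have hiE : Even i := ⟨ki, hki⟩
        have hrB : rB i j = 1 := by
          unfold rB
          rw [if_neg (fun h => Nat.not_odd_iff_even.mpr hiE h.1),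
              if_pos ⟨hiE, ⟨kj, hkj⟩⟩]
        rw [hrB, pow_one]
        exact assoc_eq (associated_of_dvd_dvd hdP (EuclideanDomain.dvd_gcd hPNB hPHB))
      · -- i odd, j even : r = 0
        obtain ⟨ki, hki⟩ := hpi
        obtain ⟨u1, hu1⟩ : ∃ t, 2^i = 2 + 3*t := by
          have h := nat_odd_pow ki; rwa [show 2*ki+1 = i by omega] at h
        have hjE : Even j := by
          rcases Nat.even_or_odd j with h | h
          · exact h
          · exfalso; rw [Nat.odd_iff] at h; omega
        obtain ⟨kj, hkj⟩ := hjE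
        obtain ⟨u2, hu2⟩ : ∃ t, 2^j = 1 + 3*t := by
          have h := nat_even_pow kj; rwa [show 2*kj = j by omega] at h
        have hPHB1 : PB ∣ HB + 1 := by
          rw [hHB]
          have key : ((X:R2)^(2^i+2^j) + X^(2^i+1) + X^(2^i) + X^(2^j+1) + 1) + 1
              = ((X:R2)^(2^i+2^j)+X^(2^i+1)) + (X^(2^i)+X^(2^j+1)) := by
            linear_combination (1:R2) * two_eq_zero
          rw [key]
          exact dvd_add (P_pair (by omega)) (P_pair (by omega))
        have hnotHB : ¬ PB ∣ HB := not_dvd_of_succ hPHB1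
        have hd0 : d ∣ (PB)^0 := by
          refine dvd_pow_pred ?_ hdH ?_
          · rw [zero_add, pow_one]; exact hdP
          · rw [zero_add, pow_one]; exact hnotHB
        have hiO : Odd i := ⟨ki, by omega⟩
        have hrB : rB i j = 0 := by
          unfold rB
          rw [if_pos ⟨hiO, ⟨kj, hkj⟩⟩]
        rw [hrB]
        exact gcd_eq_pow (by rw [pow_zero]; exact one_dvd _)
          (by rw [pow_zero]; exact one_dvd _) hd0
end

section
/- In the polynomial ring F_2[x], the monic greatest common divisor of N_C(x) and H_C(x) equals (x^2 + x + 1)^{r_C}. -/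
open Polynomial

namespace GcdNCHCAux

noncomputable def fq : Polynomial (ZMod 2) := X ^ 2 + X + 1

lemma h2 : (2 : Polynomial (ZMod 2)) = 0 := by
  rw [← map_ofNat (C : ZMod 2 →+* Polynomial (ZMod 2)) 2,
    show (2 : ZMod 2) = 0 by decide, map_zero]

lemma fq_def : fq = X ^ 2 + X + 1 := rfl

lemma natDegree_fq : fq.natDegree = 2 := by
  unfold fq; compute_degree!

lemma degree_fq : fq.degree = 2 := by
  unfold fq; compute_degree!

lemma fq_ne_zero : fq ≠ 0 := by
  intro h
  have := natDegree_fq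
  rw [h] at this
  simp at this

lemma fq_not_unit : ¬ IsUnit fq := by
  intro h
  have := Polynomial.natDegree_eq_zero_of_isUnit h
  rw [natDegree_fq] at this
  omega

lemma fq_irreducible : Irreducible fq := by
  rw [Polynomial.irreducible_iff_roots_eq_zero_of_degree_le_three
    (by rw [natDegree_fq]) (by rw [natDegree_fq]; omega)]
  rw [Multiset.eq_zero_iff_forall_notMem]
  intro a ha
  rw [mem_roots fq_ne_zero] at ha
  have hz : fq.eval a = 0 := ha
  rw [fq_def] at hz
  simp only [eval_add, eval_pow, eval_X, eval_one] at hz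
  clear ha
  revert hz
  revert a
  decide

lemma fq_prime : Prime fq := fq_irreducible.prime

/-- valuation predicate at `fq`. -/
def V (p : Polynomial (ZMod 2)) (n : ℕ) : Prop :=
  fq ^ n ∣ p ∧ ¬ fq ^ (n + 1) ∣ p

lemma V.mul {p q : Polynomial (ZMod 2)} {m n : ℕ} (hp : V p m) (hq : V q n) :
    V (p * q) (m + n) := by
  obtain ⟨p', rfl⟩ := hp.1
  obtain ⟨q', rfl⟩ := hq.1
  constructor
  · rw [pow_add]
    exact mul_dvd_mul (dvd_mul_right _ _) (dvd_mul_right _ _)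
  · intro hd
    have e : fq ^ m * p' * (fq ^ n * q') = fq ^ (m + n) * (p' * q') := by
      rw [pow_add]; ring
    rw [e, pow_succ, mul_dvd_mul_iff_left (pow_ne_zero _ fq_ne_zero)] at hd
    rcases fq_prime.2.2 _ _ hd with h | h
    · exact hp.2 (by rw [pow_succ]; exact mul_dvd_mul_left _ h)
    · exact hq.2 (by rw [pow_succ]; exact mul_dvd_mul_left _ h)

lemma V_one : V 1 0 := by
  refine ⟨by simp, ?_⟩
  intro h
  exact fq_not_unit (isUnit_of_dvd_one (by simpa using h))

lemma V.sq {p : Polynomial (ZMod 2)} {m : ℕ} (hp : V p m) : V (p ^ 2) (2 * m) := by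
  have := hp.mul hp
  rwa [← pow_two, ← two_mul] at this

lemma V_fq_pow (n : ℕ) : V (fq ^ n) n := by
  refine ⟨dvd_rfl, ?_⟩
  intro h
  rw [pow_succ] at h
  have : fq ∣ 1 := by
    have := (mul_dvd_mul_iff_left (a := fq ^ n) (pow_ne_zero _ fq_ne_zero)
      (b := fq) (c := 1)).mp (by simpa using h)
    exact this
  exact fq_not_unit (isUnit_of_dvd_one this)

lemma V_fq : V fq 1 := by simpa using V_fq_pow 1

lemma V.add {p q : Polynomial (ZMod 2)} {m n : ℕ} (hp : V p m) (hq : V q n)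
    (h : m < n) : V (p + q) m := by
  constructor
  · exact dvd_add hp.1 ((pow_dvd_pow _ h.le).trans hq.1)
  · intro hd
    have h1 : fq ^ (m + 1) ∣ q := (pow_dvd_pow _ h).trans hq.1
    have : p = (p + q) + q := by linear_combination (-q) * h2
    exact hp.2 (this ▸ dvd_add hd h1)

lemma V.add_ne {p q : Polynomial (ZMod 2)} {m n : ℕ} (hp : V p m) (hq : V q n)
    (h : m ≠ n) : V (p + q) (min m n) := by
  rcases lt_or_gt_of_ne h with hlt | hlt
  · rw [min_eq_left hlt.le]; exact hp.add hq hlt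
  · rw [min_eq_right hlt.le, add_comm]; exact hq.add hp hlt

lemma sq_add (p q : Polynomial (ZMod 2)) : (p + q) ^ 2 = p ^ 2 + q ^ 2 := by
  linear_combination (p * q) * h2

lemma fq_pow_pow (k : ℕ) : fq ^ 2 ^ k = X ^ 2 ^ (k + 1) + X ^ 2 ^ k + 1 := by
  induction k with
  | zero => simpa [fq_def] using rfl
  | succ k ih =>
    have e : fq ^ 2 ^ (k + 1) = (fq ^ 2 ^ k) ^ 2 := by
      rw [← pow_mul, pow_succ]
    rw [e, ih, sq_add, sq_add, one_pow, ← pow_mul, ← pow_mul, ← pow_succ, ← pow_succ]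

lemma dvd_X3 : fq ∣ (X : Polynomial (ZMod 2)) ^ 3 + 1 := by
  refine ⟨X + 1, ?_⟩
  rw [fq_def]
  linear_combination (-(X ^ 2 + X) : Polynomial (ZMod 2)) * h2

lemma dvd_X3m (m : ℕ) : fq ∣ (X : Polynomial (ZMod 2)) ^ (3 * m) + 1 := by
  induction m with
  | zero =>
    rw [show (X : Polynomial (ZMod 2)) ^ (3 * 0) + 1 = 0 by norm_num; linear_combination h2]
    exact dvd_zero _
  | succ m ih =>
    have e : (X : Polynomial (ZMod 2)) ^ (3 * (m + 1)) + 1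
        = X ^ 3 * (X ^ (3 * m) + 1) + (X ^ 3 + 1) := by
      rw [show 3 * (m + 1) = 3 * m + 3 by ring, pow_add]
      linear_combination (-(X : Polynomial (ZMod 2)) ^ 3) * h2
    rw [e]
    exact dvd_add (Dvd.dvd.mul_left ih _) dvd_X3

lemma dvd_shift (k : ℕ) : fq ∣ (X : Polynomial (ZMod 2)) ^ 2 ^ (k + 2) + X ^ 2 ^ k := by
  have e : (X : Polynomial (ZMod 2)) ^ 2 ^ (k + 2) + X ^ 2 ^ k
      = X ^ 2 ^ k * (X ^ (3 * 2 ^ k) + 1) := by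
    rw [show 2 ^ (k + 2) = 2 ^ k + 3 * 2 ^ k by rw [pow_succ, pow_succ]; ring, pow_add]
    ring
  rw [e]
  exact Dvd.dvd.mul_left (dvd_X3m _) _

lemma dvd_iff_shift (k : ℕ) (p : Polynomial (ZMod 2)) :
    (fq ∣ X ^ 2 ^ (k + 2) + p) ↔ (fq ∣ X ^ 2 ^ k + p) := by
  have e1 : (X : Polynomial (ZMod 2)) ^ 2 ^ k + p
      = (X ^ 2 ^ (k + 2) + X ^ 2 ^ k) + (X ^ 2 ^ (k + 2) + p) := by
    linear_combination (-(X : Polynomial (ZMod 2)) ^ 2 ^ (k + 2)) * h2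
  have e2 : (X : Polynomial (ZMod 2)) ^ 2 ^ (k + 2) + p
      = (X ^ 2 ^ (k + 2) + X ^ 2 ^ k) + (X ^ 2 ^ k + p) := by
    linear_combination (-(X : Polynomial (ZMod 2)) ^ 2 ^ k) * h2
  constructor
  · intro h; rw [e1]; exact dvd_add (dvd_shift k) h
  · intro h; rw [e2]; exact dvd_add (dvd_shift k) h

lemma dvd_one_iff : ¬ fq ∣ (1 : Polynomial (ZMod 2)) := by
  intro h; exact fq_not_unit (isUnit_of_dvd_one h)

lemma dvd_g_iff : ∀ k : ℕ, (fq ∣ (X : Polynomial (ZMod 2)) ^ 2 ^ k + X + 1) ↔ Odd k := by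
  intro k
  induction k using Nat.strong_induction_on with
  | _ k ih =>
    match k with
    | 0 =>
      have e : (X : Polynomial (ZMod 2)) ^ 2 ^ 0 + X + 1 = 1 := by
        norm_num
        linear_combination (X : Polynomial (ZMod 2)) * h2
      rw [e]
      simp [dvd_one_iff, Nat.odd_iff]
    | 1 =>
      have e : (X : Polynomial (ZMod 2)) ^ 2 ^ 1 + X + 1 = fq := by
        rw [fq_def]; norm_num
      rw [e]
      simp [Nat.odd_iff]
    | (k + 2) =>
      have := dvd_iff_shift k (X + 1)
      rw [← add_assoc, ← add_assoc] at this
      rw [this, ih k (by omega), Nat.odd_iff, Nat.odd_iff]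
      omega

lemma dvd_h_iff : ∀ k : ℕ, 1 ≤ k → ((fq ∣ (X : Polynomial (ZMod 2)) ^ 2 ^ k + X) ↔ Even k) := by
  intro k
  induction k using Nat.strong_induction_on with
  | _ k ih =>
    match k with
    | 0 => intro h; exact absurd h (by omega)
    | 1 =>
      intro _
      have e : (1 : Polynomial (ZMod 2)) = (X ^ 2 ^ 1 + X) + fq := by
        rw [fq_def]; norm_num
        linear_combination (-(X ^ 2 + X) : Polynomial (ZMod 2)) * h2
      constructor
      · intro h
        exact absurd (e ▸ dvd_add h dvd_rfl) dvd_one_iff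
      · intro h; rw [Nat.even_iff] at h; omega
    | 2 =>
      intro _
      have e : (X : Polynomial (ZMod 2)) ^ 2 ^ 2 + X = X * (X ^ (3 * 1) + 1) := by
        norm_num; ring
      constructor
      · intro _; exact even_two
      · intro _; rw [e]; exact Dvd.dvd.mul_left (dvd_X3m 1) _
    | (k + 3) =>
      intro _
      have := dvd_iff_shift (k + 1) X
      rw [this, ih (k + 1) (by omega) (by omega), Nat.even_iff, Nat.even_iff]
      omega

lemma sqf {p : Polynomial (ZMod 2)} (h : fq ^ 2 ∣ p) : fq ∣ derivative p := by
  obtain ⟨s, rfl⟩ := h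
  rw [derivative_mul, derivative_pow,
    show ((2 : ℕ) : ZMod 2) = 0 from by decide, map_zero, zero_mul, zero_mul, zero_mul,
    zero_add]
  exact Dvd.dvd.mul_right (dvd_pow_self fq two_ne_zero) _

lemma cast_two_pow (k : ℕ) (hk : 1 ≤ k) : ((2 ^ k : ℕ) : ZMod 2) = 0 := by
  rw [Nat.cast_pow, show ((2 : ℕ) : ZMod 2) = 0 by decide, zero_pow (by omega)]

lemma deriv_g (k : ℕ) (hk : 1 ≤ k) :
    derivative ((X : Polynomial (ZMod 2)) ^ 2 ^ k + X + 1) = 1 := by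
  rw [derivative_add, derivative_add, derivative_one, derivative_X, derivative_X_pow,
    cast_two_pow k hk]
  simp

lemma deriv_h (k : ℕ) (hk : 1 ≤ k) :
    derivative ((X : Polynomial (ZMod 2)) ^ 2 ^ k + X) = 1 := by
  rw [derivative_add, derivative_X, derivative_X_pow, cast_two_pow k hk]
  simp

lemma not_sq_dvd_of_deriv {p : Polynomial (ZMod 2)} (h : derivative p = 1) :
    ¬ fq ^ 2 ∣ p := by
  intro hd
  have := sqf hd
  rw [h] at this
  exact dvd_one_iff this

lemma Vg1 (k : ℕ) : V ((X : Polynomial (ZMod 2)) ^ 2 ^ k + X + 1) (if Odd k then 1 else 0) := by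
  by_cases h : Odd k
  · rw [if_pos h]
    constructor
    · rw [pow_one]; exact (dvd_g_iff k).2 h
    · have hk : 1 ≤ k := by rcases h with ⟨t, rfl⟩; omega
      exact not_sq_dvd_of_deriv (deriv_g k hk)
  · rw [if_neg h]
    refine ⟨one_dvd _, ?_⟩
    rw [pow_one]
    intro hd
    exact h ((dvd_g_iff k).1 hd)

lemma Vh (k : ℕ) (hk : 1 ≤ k) :
    V ((X : Polynomial (ZMod 2)) ^ 2 ^ k + X) (if Even k then 1 else 0) := by
  by_cases h : Even k
  · rw [if_pos h]
    exact ⟨by rw [pow_one]; exact (dvd_h_iff k hk).2 h, not_sq_dvd_of_deriv (deriv_h k hk)⟩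
  · rw [if_neg h]
    refine ⟨one_dvd _, ?_⟩
    rw [pow_one]
    intro hd
    exact h ((dvd_h_iff k hk).1 hd)

lemma Vg (k l : ℕ) :
    V ((X : Polynomial (ZMod 2)) ^ 2 ^ k + X ^ 2 ^ l + 1)
      (if Odd (k + l) then 2 ^ min k l else 0) := by
  induction k generalizing l with
  | zero =>
    have e : (X : Polynomial (ZMod 2)) ^ 2 ^ 0 + X ^ 2 ^ l + 1 = X ^ 2 ^ l + X + 1 := by
      norm_num; ring
    rw [e]
    have := Vg1 l
    simpa [Nat.min_eq_left (Nat.zero_le l)] using this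
  | succ k ih =>
    match l with
    | 0 =>
      have e : (X : Polynomial (ZMod 2)) ^ 2 ^ (k + 1) + X ^ 2 ^ 0 + 1
          = X ^ 2 ^ (k + 1) + X + 1 := by norm_num
      rw [e]
      have := Vg1 (k + 1)
      have hpar : Odd (k + 1 + 0) ↔ Odd (k + 1) := by rw [Nat.add_zero]
      simpa [Nat.min_eq_right (Nat.zero_le (k + 1))] using this
    | (l + 1) =>
      have e : (X : Polynomial (ZMod 2)) ^ 2 ^ (k + 1) + X ^ 2 ^ (l + 1) + 1
          = (X ^ 2 ^ k + X ^ 2 ^ l + 1) ^ 2 := by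
        rw [sq_add, sq_add, one_pow, ← pow_mul, ← pow_mul, ← pow_succ, ← pow_succ]
      rw [e]
      have := (ih l).sq
      have hpar : Odd (k + 1 + (l + 1)) ↔ Odd (k + l) := by
        rw [Nat.odd_iff, Nat.odd_iff]; omega
      have hmin : min (k + 1) (l + 1) = min k l + 1 := by omega
      have hgoal : (if Odd (k + 1 + (l + 1)) then 2 ^ min (k + 1) (l + 1) else 0)
          = 2 * (if Odd (k + l) then 2 ^ min k l else 0) := by
        by_cases hp : Odd (k + l)
        · rw [if_pos (hpar.mpr hp), if_pos hp, hmin, pow_succ, Nat.mul_comm]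
        · rw [if_neg (fun hc => hp (hpar.mp hc)), if_neg hp, Nat.mul_zero]
      rw [hgoal]
      exact this

noncomputable def g2ex (k l : ℕ) : Polynomial (ZMod 2) :=
  X ^ 2 ^ k * X ^ 2 ^ l + X ^ 2 ^ k * X + X ^ 2 ^ l * X + X + 1

lemma g2ex_symm (k l : ℕ) : g2ex k l = g2ex l k := by
  unfold g2ex; ring

lemma eA (k : ℕ) : (X : Polynomial (ZMod 2)) ^ 2 ^ (k + 1) = (X ^ 2 ^ k) ^ 2 := by
  rw [← pow_mul, ← pow_succ]

lemma g2_eq (k l : ℕ) :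
    g2ex k l = fq ^ 2 ^ k + (X ^ 2 ^ k + X) * (X ^ 2 ^ k + X ^ 2 ^ l + 1) := by
  rw [fq_pow_pow k, eA k]
  unfold g2ex
  linear_combination (-((X : Polynomial (ZMod 2)) ^ 2 ^ k) ^ 2 - X ^ 2 ^ k) * h2

lemma Vg2_left0 (l : ℕ) : V (g2ex 0 l) 1 := by
  have e : g2ex 0 l = fq := by
    unfold g2ex
    rw [fq_def]
    norm_num
    linear_combination ((X : Polynomial (ZMod 2)) ^ 2 ^ l * X) * h2
  rw [e]
  exact V_fq

lemma Vg2_min (k l : ℕ) {c a : ℕ}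
    (hc : V ((X : Polynomial (ZMod 2)) ^ 2 ^ k + X) c)
    (ha : V ((X : Polynomial (ZMod 2)) ^ 2 ^ k + X ^ 2 ^ l + 1) a)
    (hne : 2 ^ k ≠ c + a) :
    V (g2ex k l) (min (2 ^ k) (c + a)) := by
  rw [g2_eq k l]
  exact (V_fq_pow (2 ^ k)).add_ne (hc.mul ha) hne

lemma K3 (p q : Polynomial (ZMod 2)) :
    p = X * (X * p + (X + 1) * q) + (X + 1) * ((X + 1) * p + X * q) := by
  linear_combination (-(X ^ 2 * p + X ^ 2 * q + X * p + X * q)) * h2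

lemma K3' (p q : Polynomial (ZMod 2)) :
    q = (X + 1) * (X * p + (X + 1) * q) + X * ((X + 1) * p + X * q) := by
  linear_combination (-(X ^ 2 * p + X ^ 2 * q + X * p + X * q)) * h2

lemma assoc_eq {p q : Polynomial (ZMod 2)} (h : Associated p q) : p = q := by
  obtain ⟨u, hu⟩ := h
  obtain ⟨c, hc1, hc2⟩ := Polynomial.isUnit_iff.mp u.isUnit
  have hc0 : c ≠ 0 := hc1.ne_zero
  have hcc : ∀ d : ZMod 2, d ≠ 0 → d = 1 := by decide
  have : c = 1 := hcc c hc0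
  rw [this] at hc2
  rw [← hu, ← hc2, map_one, mul_one]

lemma pow_le_of_dvd_pow {m n : ℕ} (h : fq ^ m ∣ fq ^ n) : m ≤ n := by
  by_contra hc
  push_neg at hc
  have h1 : fq ^ (n + 1) ∣ fq ^ m := pow_dvd_pow _ hc
  exact (V_fq_pow n).2 (h1.trans h)

lemma finish (N H : Polynomial (ZMod 2)) (r t1 : ℕ) (hVN : V N r) (hVH : V H r)
    (hdvd : EuclideanDomain.gcd N H ∣ fq ^ t1) :
    EuclideanDomain.gcd N H = fq ^ r := by
  obtain ⟨t, _, hassoc⟩ := (dvd_prime_pow fq_prime _).mp hdvd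
  have hd : EuclideanDomain.gcd N H = fq ^ t := assoc_eq hassoc
  have h1 : fq ^ r ∣ fq ^ t := hd ▸ EuclideanDomain.dvd_gcd hVN.1 hVH.1
  have hH2 : fq ^ t ∣ H := hd ▸ EuclideanDomain.gcd_dvd_right N H
  have hrt : r ≤ t := pow_le_of_dvd_pow h1
  have htr : t ≤ r := by
    by_contra hc
    push_neg at hc
    exact hVH.2 ((pow_dvd_pow _ hc).trans hH2)
  rw [hd, le_antisymm htr hrt]

lemma VX : V (X : Polynomial (ZMod 2)) 0 := by
  refine ⟨one_dvd _, ?_⟩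
  rw [pow_one]
  intro h
  have := Polynomial.natDegree_le_of_dvd h Polynomial.X_ne_zero
  rw [natDegree_fq, natDegree_X] at this
  omega

lemma X1_ne_zero : (X + 1 : Polynomial (ZMod 2)) ≠ 0 := by
  intro h
  have : (X + 1 : Polynomial (ZMod 2)).natDegree = 1 := by compute_degree!
  rw [h] at this
  simp at this

lemma VX1 : V (X + 1 : Polynomial (ZMod 2)) 0 := by
  refine ⟨one_dvd _, ?_⟩
  rw [pow_one]
  intro h
  have := Polynomial.natDegree_le_of_dvd h X1_ne_zero
  have e1 : (X + 1 : Polynomial (ZMod 2)).natDegree = 1 := by compute_degree!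
  rw [natDegree_fq, e1] at this
  omega

lemma main_case (k l : ℕ) (Ne He : Polynomial (ZMod 2)) (a b r : ℕ)
    (hN : Ne = X * (fq * (X ^ 2 ^ k + X ^ 2 ^ l + 1) ^ 2) + (X + 1) * (g2ex k l) ^ 2)
    (hH : He = (X + 1) * (fq * (X ^ 2 ^ k + X ^ 2 ^ l + 1) ^ 2) + X * (g2ex k l) ^ 2)
    (hdp : EuclideanDomain.gcd Ne He ∣ fq ^ (2 ^ (k + 1) + 1))
    (ha : V (X ^ 2 ^ k + X ^ 2 ^ l + 1) a) (hb : V (g2ex k l) b)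
    (hr1 : min (0 + (1 + 2 * a)) (0 + 2 * b) = r) :
    EuclideanDomain.gcd Ne He = fq ^ r := by
  have hVN : V Ne r := by
    rw [hN]
    have := (VX.mul (V_fq.mul ha.sq)).add_ne (VX1.mul hb.sq) (by omega)
    rwa [hr1] at this
  have hVH : V He r := by
    rw [hH]
    have := (VX1.mul (V_fq.mul ha.sq)).add_ne (VX.mul hb.sq) (by omega)
    rwa [show min (0 + (1 + 2 * a)) (0 + 2 * b) = r from hr1] at this
  exact finish _ _ r _ hVN hVH hdp

end GcdNCHCAux


open GcdNCHCAux

/-- In `F_2[x]`, the (monic) gcd of `N_C` and `H_C` equals `(x^2 + x + 1)^{r_C}`.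
(Over `F_2` every nonzero polynomial has leading coefficient `1`, so the
Euclidean gcd is automatically the monic gcd.) -/
theorem gcd_NC_HC
    (i j : ℕ) (hi : 0 < i) (hj : 0 < j)
    (Q1 Q2 : ℕ) (hQ1 : Q1 = 2 ^ i) (hQ2 : Q2 = 2 ^ j)
    (NC HC : Polynomial (ZMod 2))
    (hNC : NC = X ^ (Q1 + Q2 + 1) + X ^ (Q1 + Q2) + X ^ (Q2 + 1) + X ^ (Q1 + 1) + 1)
    (hHC : HC = X ^ (Q1 + Q2 + 1) + X ^ Q1 + X ^ Q2 + X + 1) :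
    EuclideanDomain.gcd NC HC = (X ^ 2 + X + 1) ^ rC i j := by
  obtain ⟨k, rfl⟩ : ∃ k, i = k + 1 := ⟨i - 1, by omega⟩
  obtain ⟨l, rfl⟩ : ∃ l, j = l + 1 := ⟨j - 1, by omega⟩
  subst hQ1 hQ2 hNC hHC
  rw [← fq_def]
  -- exponent conversion lemmas
  have e3 : (X : Polynomial (ZMod 2)) ^ (2 ^ (k + 1) + 2 ^ (l + 1) + 1)
      = (X ^ 2 ^ k) ^ 2 * (X ^ 2 ^ l) ^ 2 * X := by
    rw [pow_add, pow_add, pow_one, eA k, eA l]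
  have e4 : (X : Polynomial (ZMod 2)) ^ (2 ^ (k + 1) + 2 ^ (l + 1))
      = (X ^ 2 ^ k) ^ 2 * (X ^ 2 ^ l) ^ 2 := by
    rw [pow_add, eA k, eA l]
  have e5 : (X : Polynomial (ZMod 2)) ^ (2 ^ (l + 1) + 1) = (X ^ 2 ^ l) ^ 2 * X := by
    rw [pow_add, pow_one, eA l]
  have e6 : (X : Polynomial (ZMod 2)) ^ (2 ^ (k + 1) + 1) = (X ^ 2 ^ k) ^ 2 * X := by
    rw [pow_add, pow_one, eA k]
  -- the two fundamental combinations
  have hG1 : X * (X ^ (2 ^ (k + 1) + 2 ^ (l + 1) + 1) + X ^ (2 ^ (k + 1) + 2 ^ (l + 1))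
        + X ^ (2 ^ (l + 1) + 1) + X ^ (2 ^ (k + 1) + 1) + 1)
      + (X + 1) * (X ^ (2 ^ (k + 1) + 2 ^ (l + 1) + 1) + X ^ 2 ^ (k + 1) + X ^ 2 ^ (l + 1)
        + X + 1)
      = fq * ((X : Polynomial (ZMod 2)) ^ 2 ^ k + X ^ 2 ^ l + 1) ^ 2 := by
    rw [fq_def, e3, e4, e5, e6, eA k, eA l]
    linear_combination ((X ^ 2 ^ k) ^ 2 * (X ^ 2 ^ l) ^ 2 * X ^ 2
      + (X ^ 2 ^ k) ^ 2 * (X ^ 2 ^ l) ^ 2 * X - X ^ 2 ^ k * X ^ 2 ^ l * X ^ 2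
      - X ^ 2 ^ k * X ^ 2 ^ l * X - X ^ 2 ^ k * X ^ 2 ^ l - X ^ 2 ^ k * X ^ 2
      - X ^ 2 ^ k * X - X ^ 2 ^ k - X ^ 2 ^ l * X ^ 2 - X ^ 2 ^ l * X - X ^ 2 ^ l
      + (X : Polynomial (ZMod 2))) * h2
  have hG2 : (X + 1) * (X ^ (2 ^ (k + 1) + 2 ^ (l + 1) + 1) + X ^ (2 ^ (k + 1) + 2 ^ (l + 1))
        + X ^ (2 ^ (l + 1) + 1) + X ^ (2 ^ (k + 1) + 1) + 1)
      + X * (X ^ (2 ^ (k + 1) + 2 ^ (l + 1) + 1) + X ^ 2 ^ (k + 1) + X ^ 2 ^ (l + 1)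
        + X + 1)
      = (g2ex k l) ^ 2 := by
    rw [show g2ex k l = X ^ 2 ^ k * X ^ 2 ^ l + X ^ 2 ^ k * X + X ^ 2 ^ l * X + X + 1 from rfl,
      e3, e4, e5, e6, eA k, eA l]
    linear_combination ((X ^ 2 ^ k) ^ 2 * (X ^ 2 ^ l) ^ 2 * X ^ 2
      + (X ^ 2 ^ k) ^ 2 * (X ^ 2 ^ l) ^ 2 * X - (X ^ 2 ^ k) ^ 2 * X ^ 2 ^ l * X
      + (X ^ 2 ^ k) ^ 2 * X - X ^ 2 ^ k * (X ^ 2 ^ l) ^ 2 * X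
      - X ^ 2 ^ k * X ^ 2 ^ l * X ^ 2 - X ^ 2 ^ k * X ^ 2 ^ l * X - X ^ 2 ^ k * X ^ 2 ^ l
      - X ^ 2 ^ k * X ^ 2 - X ^ 2 ^ k * X + (X ^ 2 ^ l) ^ 2 * X - X ^ 2 ^ l * X ^ 2
      - X ^ 2 ^ l * X) * h2
  have hN : (X : Polynomial (ZMod 2)) ^ (2 ^ (k + 1) + 2 ^ (l + 1) + 1)
        + X ^ (2 ^ (k + 1) + 2 ^ (l + 1)) + X ^ (2 ^ (l + 1) + 1) + X ^ (2 ^ (k + 1) + 1) + 1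
      = X * (fq * (X ^ 2 ^ k + X ^ 2 ^ l + 1) ^ 2) + (X + 1) * (g2ex k l) ^ 2 := by
    rw [← hG1, ← hG2]; exact K3 _ _
  have hH : (X : Polynomial (ZMod 2)) ^ (2 ^ (k + 1) + 2 ^ (l + 1) + 1)
        + X ^ 2 ^ (k + 1) + X ^ 2 ^ (l + 1) + X + 1
      = (X + 1) * (fq * (X ^ 2 ^ k + X ^ 2 ^ l + 1) ^ 2) + X * (g2ex k l) ^ 2 := by
    rw [← hG1, ← hG2]; exact K3' _ _
  -- divisibility of the gcd by a power of fq
  have hK5 : ((X ^ 2 ^ k) ^ 2 + X ^ 2) * (fq * (X ^ 2 ^ k + X ^ 2 ^ l + 1) ^ 2)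
      + fq * (g2ex k l) ^ 2 = fq ^ (2 ^ (k + 1) + 1) := by
    have er : fq ^ (2 ^ (k + 1) + 1) = fq * (fq ^ 2 ^ k) ^ 2 := by
      rw [pow_succ' fq (2 ^ (k + 1)), show (2 : ℕ) ^ (k + 1) = 2 ^ k * 2 from pow_succ 2 k,
        pow_mul]
    rw [er, fq_pow_pow k, eA k,
      show g2ex k l = X ^ 2 ^ k * X ^ 2 ^ l + X ^ 2 ^ k * X + X ^ 2 ^ l * X + X + 1 from rfl,
      fq_def]
    linear_combination ((X ^ 2 ^ k) ^ 3 * X ^ 2 ^ l * X ^ 2 + (X ^ 2 ^ k) ^ 3 * X ^ 2 ^ l * X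
      + (X ^ 2 ^ k) ^ 3 * X ^ 2 ^ l + (X ^ 2 ^ k) ^ 2 * (X ^ 2 ^ l) ^ 2 * X ^ 2
      + (X ^ 2 ^ k) ^ 2 * (X ^ 2 ^ l) ^ 2 * X + (X ^ 2 ^ k) ^ 2 * (X ^ 2 ^ l) ^ 2
      + (X ^ 2 ^ k) ^ 2 * X ^ 2 ^ l * X ^ 3
      + (2 : Polynomial (ZMod 2)) * (X ^ 2 ^ k) ^ 2 * X ^ 2 ^ l * X ^ 2
      + (2 : Polynomial (ZMod 2)) * (X ^ 2 ^ k) ^ 2 * X ^ 2 ^ l * X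
      + (X ^ 2 ^ k) ^ 2 * X ^ 2 ^ l + (X ^ 2 ^ k) ^ 2 * X ^ 4 + (X ^ 2 ^ k) ^ 2 * X ^ 3
      - (X ^ 2 ^ k) ^ 2 * X - (X ^ 2 ^ k) ^ 2 + X ^ 2 ^ k * (X ^ 2 ^ l) ^ 2 * X ^ 3
      + X ^ 2 ^ k * (X ^ 2 ^ l) ^ 2 * X ^ 2 + X ^ 2 ^ k * (X ^ 2 ^ l) ^ 2 * X
      + (2 : Polynomial (ZMod 2)) * X ^ 2 ^ k * X ^ 2 ^ l * X ^ 4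
      + (3 : Polynomial (ZMod 2)) * X ^ 2 ^ k * X ^ 2 ^ l * X ^ 3
      + (4 : Polynomial (ZMod 2)) * X ^ 2 ^ k * X ^ 2 ^ l * X ^ 2
      + (2 : Polynomial (ZMod 2)) * X ^ 2 ^ k * X ^ 2 ^ l * X + X ^ 2 ^ k * X ^ 2 ^ l
      + (2 : Polynomial (ZMod 2)) * X ^ 2 ^ k * X ^ 4
      + (3 : Polynomial (ZMod 2)) * X ^ 2 ^ k * X ^ 3
      + (2 : Polynomial (ZMod 2)) * X ^ 2 ^ k * X ^ 2 - X ^ 2 ^ k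
      + (X ^ 2 ^ l) ^ 2 * X ^ 4 + (X ^ 2 ^ l) ^ 2 * X ^ 3 + (X ^ 2 ^ l) ^ 2 * X ^ 2
      + (2 : Polynomial (ZMod 2)) * X ^ 2 ^ l * X ^ 4
      + (3 : Polynomial (ZMod 2)) * X ^ 2 ^ l * X ^ 3
      + (3 : Polynomial (ZMod 2)) * X ^ 2 ^ l * X ^ 2 + X ^ 2 ^ l * X + X ^ 4
      + (2 : Polynomial (ZMod 2)) * X ^ 3 + (2 : Polynomial (ZMod 2)) * X ^ 2
      + (X : Polynomial (ZMod 2))) * h2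
  have hdp : EuclideanDomain.gcd
      (X ^ (2 ^ (k + 1) + 2 ^ (l + 1) + 1) + X ^ (2 ^ (k + 1) + 2 ^ (l + 1))
        + X ^ (2 ^ (l + 1) + 1) + X ^ (2 ^ (k + 1) + 1) + 1)
      (X ^ (2 ^ (k + 1) + 2 ^ (l + 1) + 1) + X ^ 2 ^ (k + 1) + X ^ 2 ^ (l + 1) + X + 1)
      ∣ fq ^ (2 ^ (k + 1) + 1) := by
    rw [← hK5]
    refine dvd_add (Dvd.dvd.mul_left ?_ _) (Dvd.dvd.mul_left ?_ _)
    · rw [← hG1]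
      exact dvd_add ((EuclideanDomain.gcd_dvd_left _ _).mul_left X)
        ((EuclideanDomain.gcd_dvd_right _ _).mul_left (X + 1))
    · rw [← hG2]
      exact dvd_add ((EuclideanDomain.gcd_dvd_left _ _).mul_left (X + 1))
        ((EuclideanDomain.gcd_dvd_right _ _).mul_left X)
  -- case analysis
  have h2k : (2 : ℕ) ^ (k + 1) = 2 * 2 ^ k := by rw [pow_succ]; ring
  have h2l : (2 : ℕ) ^ (l + 1) = 2 * 2 ^ l := by rw [pow_succ]; ring
  have h1k : (1 : ℕ) ≤ 2 ^ k := Nat.one_le_two_pow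
  have h1l : (1 : ℕ) ≤ 2 ^ l := Nat.one_le_two_pow
  rcases Nat.even_or_odd k with hk | hk <;> rcases Nat.even_or_odd l with hl | hl
  · -- k even, l even : i, j odd, r = 1
    have hpar : ¬ Odd (k + l) := by
      rw [Nat.even_iff] at hk hl; rw [Nat.odd_iff]; omega
    have ha : V (X ^ 2 ^ k + X ^ 2 ^ l + 1) 0 := by
      have := Vg k l; rwa [if_neg hpar] at this
    have hb : V (g2ex k l) 1 := by
      rcases Nat.eq_zero_or_pos k with hk0 | hk0
      · subst hk0; exact Vg2_left0 l
      · have hk2 : 2 ≤ k := by rw [Nat.even_iff] at hk; omega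
        have hc := Vh k (by omega)
        rw [if_pos hk] at hc
        have h4 : 4 ≤ 2 ^ k := by
          calc (4 : ℕ) = 2 ^ 2 := by norm_num
          _ ≤ 2 ^ k := Nat.pow_le_pow_right (by omega) hk2
        have := Vg2_min k l hc ha (by omega)
        rwa [show min (2 ^ k) (1 + 0) = 1 by omega] at this
    have hrc : rC (k + 1) (l + 1) = 1 := by
      have hok : Odd (k + 1) := hk.add_one
      have hol : Odd (l + 1) := hl.add_one
      simp only [rC]
      rw [if_neg (by simp [Nat.not_even_iff_odd.mpr hok]), if_pos ⟨hok, hol⟩]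
    rw [hrc]
    exact main_case k l _ _ 0 1 1 hN hH hdp ha hb (by omega)
  · -- k even, l odd : i odd, j even
    have hpar : Odd (k + l) := by
      rw [Nat.even_iff] at hk; rw [Nat.odd_iff] at hl ⊢; omega
    have hne : k ≠ l := by
      rw [Nat.even_iff] at hk; rw [Nat.odd_iff] at hl; omega
    have ha : V (X ^ 2 ^ k + X ^ 2 ^ l + 1) (2 ^ min k l) := by
      have := Vg k l; rwa [if_pos hpar] at this
    have hok : Odd (k + 1) := hk.add_one
    have hej : Even (l + 1) := hl.add_one
    rcases lt_or_gt_of_ne hne with hkl | hkl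
    · -- k < l : r = 2^(k+1)
      have hmin : min k l = k := by omega
      rw [hmin] at ha
      have hb : V (g2ex k l) (2 ^ k) := by
        rcases Nat.eq_zero_or_pos k with hk0 | hk0
        · subst hk0
          simpa using Vg2_left0 l
        · have hc := Vh k (by omega)
          rw [if_pos hk] at hc
          have := Vg2_min k l hc ha (by omega)
          rwa [show min (2 ^ k) (1 + 2 ^ k) = 2 ^ k by omega] at this
      have hrc : rC (k + 1) (l + 1) = 2 ^ (k + 1) := by
        have hnee : ¬ (Even (k + 1) ∧ Even (l + 1)) := by
          rintro ⟨c1, -⟩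
          rw [Nat.even_iff] at c1 hk; omega
        have hnoo : ¬ (Odd (k + 1) ∧ Odd (l + 1)) := by
          rintro ⟨-, c2⟩
          rw [Nat.odd_iff] at c2 hl; omega
        simp only [rC]
        rw [if_neg hnee, if_neg hnoo, if_pos hok,
          if_pos (Nat.pow_le_pow_right (by omega) (by omega))]
      rw [hrc]
      exact main_case k l _ _ (2 ^ k) (2 ^ k) (2 ^ (k + 1)) hN hH hdp ha hb (by omega)
    · -- l < k : r = 2^(l+1) + 1
      have hmin : min k l = l := by omega
      rw [hmin] at ha
      have hk2 : 2 ≤ k := by rw [Nat.even_iff] at hk; omega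
      have hpow : 2 ^ (l + 1) ≤ 2 ^ k := Nat.pow_le_pow_right (by omega) (by omega)
      have hll : (2 : ℕ) ≤ 2 ^ l := by
        calc (2 : ℕ) = 2 ^ 1 := rfl
        _ ≤ 2 ^ l := Nat.pow_le_pow_right (by omega) (by rw [Nat.odd_iff] at hl; omega)
      have hb : V (g2ex k l) (1 + 2 ^ l) := by
        have hc := Vh k (by omega)
        rw [if_pos hk] at hc
        have := Vg2_min k l hc ha (by omega)
        rwa [show min (2 ^ k) (1 + 2 ^ l) = 1 + 2 ^ l by omega] at this
      have hrc : rC (k + 1) (l + 1) = 2 ^ (l + 1) + 1 := by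
        have hnee : ¬ (Even (k + 1) ∧ Even (l + 1)) := by
          rintro ⟨c1, -⟩
          rw [Nat.even_iff] at c1 hk; omega
        have hnoo : ¬ (Odd (k + 1) ∧ Odd (l + 1)) := by
          rintro ⟨-, c2⟩
          rw [Nat.odd_iff] at c2 hl; omega
        simp only [rC]
        rw [if_neg hnee, if_neg hnoo, if_pos hok,
          if_neg (by
            have : 2 ^ (l + 1) < 2 ^ (k + 1) := Nat.pow_lt_pow_right (by omega) (by omega)
            omega)]
      rw [hrc]
      exact main_case k l _ _ (2 ^ l) (1 + 2 ^ l) (2 ^ (l + 1) + 1) hN hH hdp ha hb (by omega)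
  · -- k odd, l even : i even, j odd
    have hpar : Odd (k + l) := by
      rw [Nat.even_iff] at hl; rw [Nat.odd_iff] at hk ⊢; omega
    have hne : k ≠ l := by
      rw [Nat.even_iff] at hl; rw [Nat.odd_iff] at hk; omega
    have ha : V (X ^ 2 ^ k + X ^ 2 ^ l + 1) (2 ^ min k l) := by
      have := Vg k l; rwa [if_pos hpar] at this
    have hei : Even (k + 1) := hk.add_one
    have hoj : Odd (l + 1) := hl.add_one
    rcases lt_or_gt_of_ne hne with hkl | hkl
    · -- k < l : r = 2^(k+1) + 1, use swapped identity
      have hmin : min k l = k := by omega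
      rw [hmin] at ha
      have hl2 : 2 ≤ l := by rw [Nat.even_iff] at hl; omega
      have hpow : 2 ^ (k + 1) ≤ 2 ^ l := Nat.pow_le_pow_right (by omega) (by omega)
      have ha' : V (X ^ 2 ^ l + X ^ 2 ^ k + 1) (2 ^ k) := by
        have := Vg l k
        rw [if_pos (by rwa [Nat.add_comm]), show min l k = k by omega] at this
        exact this
      have hkk : (2 : ℕ) ≤ 2 ^ k := by
        calc (2 : ℕ) = 2 ^ 1 := rfl
        _ ≤ 2 ^ k := Nat.pow_le_pow_right (by omega) (by rw [Nat.odd_iff] at hk; omega)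
      have hb : V (g2ex k l) (1 + 2 ^ k) := by
        have hc := Vh l (by omega)
        rw [if_pos hl] at hc
        have := Vg2_min l k hc ha' (by omega)
        rw [g2ex_symm k l]
        rwa [show min (2 ^ l) (1 + 2 ^ k) = 1 + 2 ^ k by omega] at this
      have hrc : rC (k + 1) (l + 1) = 2 ^ (k + 1) + 1 := by
        simp only [rC]
        have hnee : ¬ (Even (k + 1) ∧ Even (l + 1)) := by
          rintro ⟨-, c2⟩
          rw [Nat.even_iff] at c2 hl; omega
        have hnoo : ¬ (Odd (k + 1) ∧ Odd (l + 1)) := by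
          rintro ⟨c1, -⟩
          rw [Nat.odd_iff] at c1 hk; omega
        have hnoi : ¬ Odd (k + 1) := by
          intro c1; rw [Nat.odd_iff] at c1 hk; omega
        rw [if_neg hnee, if_neg hnoo, if_neg hnoi,
          if_pos (Nat.pow_lt_pow_right (by omega) (by omega))]
      rw [hrc]
      exact main_case k l _ _ (2 ^ k) (1 + 2 ^ k) (2 ^ (k + 1) + 1) hN hH hdp ha hb (by omega)
    · -- l < k : r = 2^(l+1)
      have hmin : min k l = l := by omega
      rw [hmin] at ha
      have hb : V (g2ex k l) (2 ^ l) := by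
        rcases Nat.eq_zero_or_pos l with hl0 | hl0
        · subst hl0
          have := Vg2_left0 k
          rw [← g2ex_symm k 0] at this
          simpa using this
        · have hc := Vh k (by omega)
          rw [if_neg (Nat.not_even_iff_odd.mpr hk)] at hc
          have hpow : 2 ^ (l + 1) ≤ 2 ^ k := Nat.pow_le_pow_right (by omega) (by omega)
          have := Vg2_min k l hc ha (by omega)
          rwa [show min (2 ^ k) (0 + 2 ^ l) = 2 ^ l by omega] at this
      have hrc : rC (k + 1) (l + 1) = 2 ^ (l + 1) := by
        simp only [rC]
        have hnee : ¬ (Even (k + 1) ∧ Even (l + 1)) := by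
          rintro ⟨-, c2⟩
          rw [Nat.even_iff] at c2 hl; omega
        have hnoo : ¬ (Odd (k + 1) ∧ Odd (l + 1)) := by
          rintro ⟨c1, -⟩
          rw [Nat.odd_iff] at c1 hk; omega
        have hnoi : ¬ Odd (k + 1) := by
          intro c1; rw [Nat.odd_iff] at c1 hk; omega
        rw [if_neg hnee, if_neg hnoo, if_neg hnoi,
          if_neg (by
            have : 2 ^ (l + 1) < 2 ^ (k + 1) := Nat.pow_lt_pow_right (by omega) (by omega)
            omega)]
      rw [hrc]
      exact main_case k l _ _ (2 ^ l) (2 ^ l) (2 ^ (l + 1)) hN hH hdp ha hb (by omega)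
  · -- k odd, l odd : i, j even, r = 0
    have hpar : ¬ Odd (k + l) := by
      rw [Nat.odd_iff] at hk hl; rw [Nat.odd_iff]; omega
    have ha : V (X ^ 2 ^ k + X ^ 2 ^ l + 1) 0 := by
      have := Vg k l; rwa [if_neg hpar] at this
    have hb : V (g2ex k l) 0 := by
      have hc := Vh k (by rw [Nat.odd_iff] at hk; omega)
      rw [if_neg (Nat.not_even_iff_odd.mpr hk)] at hc
      have := Vg2_min k l hc ha (by omega)
      rwa [show min (2 ^ k) (0 + 0) = 0 by omega] at this
    have hrc : rC (k + 1) (l + 1) = 0 := by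
      simp only [rC]
      rw [if_pos ⟨hk.add_one, hl.add_one⟩]
    rw [hrc]
    exact main_case k l _ _ 0 0 0 hN hH hdp ha hb (by omega)
end

section
/- The polynomial H_A(x) = x^{Q1+Q2} + x^{Q1+1} + x^{Q2+1} + x + 1 has no roots in the unit circle μ_{q+1} = {x ∈ F_{q^2} : x^{q+1} = 1} if and only if i·j is odd or m is even. -/
lemma cube_pow_two_even {M : Type*} [Monoid M] {x : M} (h : x ^ 3 = 1) :
    ∀ k : ℕ, x ^ (2 ^ (2 * k)) = x := by
  intro k
  induction k with
  | zero => norm_num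
  | succ n ih =>
    have e : 2 ^ (2 * (n + 1)) = 2 ^ (2 * n) * 4 := by ring
    rw [e, pow_mul, ih, show (4:ℕ) = 3 + 1 from rfl, pow_add, h, one_mul, pow_one]

lemma cube_pow_two_odd {M : Type*} [Monoid M] {x : M} (h : x ^ 3 = 1) (k : ℕ) :
    x ^ (2 ^ (2 * k + 1)) = x ^ 2 := by
  rw [pow_succ, pow_mul, cube_pow_two_even h k]

lemma three_dvd_two_pow_add_one_iff (m : ℕ) : 3 ∣ 2 ^ m + 1 ↔ Odd m := by
  have h : ((2 ^ m + 1 : ℕ) : ZMod 3) = (-1) ^ m + 1 := by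
    push_cast
    rw [show (2:ZMod 3) = -1 by decide]
  constructor
  · intro hd
    by_contra hodd
    rw [Nat.not_odd_iff_even] at hodd
    have h0 := (ZMod.natCast_eq_zero_iff _ 3).mpr hd
    rw [h, hodd.neg_one_pow] at h0
    exact absurd h0 (by decide)
  · intro ho
    refine (ZMod.natCast_eq_zero_iff _ 3).mp ?_
    rw [h, ho.neg_one_pow]
    exact neg_add_cancel 1

/-- `H_A(x) = x^{Q1+Q2} + x^{Q1+1} + x^{Q2+1} + x + 1` has no roots in the unit
circle `μ_{q+1}` of `F_{q^2}` iff `i·j` is odd or `m` is even. -/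
theorem HA_no_roots_unit_circle_iff
    (m i j : ℕ) (hm : 0 < m) (hi : 0 < i) (hj : 0 < j)
    (q Q1 Q2 : ℕ) (hq : q = 2 ^ m) (hQ1 : Q1 = 2 ^ i) (hQ2 : Q2 = 2 ^ j)
    (F : Type*) [Field F] [Fintype F] (hF : Fintype.card F = q ^ 2) :
    (∀ x : F, x ^ (q + 1) = 1 →
        x ^ (Q1 + Q2) + x ^ (Q1 + 1) + x ^ (Q2 + 1) + x + 1 ≠ 0) ↔
      (Odd (i * j) ∨ Even m) := by
  subst hq hQ1 hQ2
  have hcard : Fintype.card F = 2 ^ (2 * m) := by rw [hF]; ring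
  have h2 : (2 : F) = 0 := by
    have h0 : ((Fintype.card F : ℕ) : F) = 0 := FiniteField.cast_card_eq_zero F
    rw [hcard] at h0
    push_cast at h0
    exact (pow_eq_zero_iff (by omega)).mp h0
  have hchar2 : ringChar F = 2 := by
    have hdvd : ringChar F ∣ 2 := by
      rw [← CharP.cast_eq_zero_iff F (ringChar F) 2]
      exact_mod_cast h2
    rcases (Nat.prime_two.eq_one_or_self_of_dvd _ hdvd) with h1 | h1
    · exact absurd h1 CharP.ringChar_ne_one
    · exact h1
  haveI : CharP F 2 := hchar2 ▸ ringChar.charP F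
  haveI : DecidableEq F := Classical.decEq F
  constructor
  · -- no roots → condition
    intro hall
    by_contra hcon
    push_neg at hcon
    rw [Nat.not_odd_iff_even, Nat.not_even_iff_odd] at hcon
    obtain ⟨hije, hmo⟩ := hcon
    have h3card : (3:ℕ) ∣ Fintype.card Fˣ := by
      rw [Fintype.card_units, hcard]
      have e4 : (2:ℕ) ^ (2 * m) = 4 ^ m := by rw [pow_mul]; norm_num
      rw [e4]
      simpa using Nat.sub_dvd_pow_sub_pow 4 1 m
    haveI : Fact (Nat.Prime 3) := ⟨by norm_num⟩
    obtain ⟨u, hu⟩ := exists_prime_orderOf_dvd_card 3 h3card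
    set ω : F := (u : F) with hω
    have hu3 : u ^ 3 = 1 := by rw [← hu]; exact pow_orderOf_eq_one u
    have hω3 : ω ^ 3 = 1 := by rw [hω, ← Units.val_pow_eq_pow_val, hu3, Units.val_one]
    have hωne : ω ≠ 1 := by
      intro h
      have hu1 : u = 1 := Units.ext (h.trans Units.val_one.symm)
      rw [hu1, orderOf_one] at hu
      norm_num at hu
    have hωr : ω ^ 2 + ω + 1 = 0 := by
      have hfac : (ω - 1) * (ω ^ 2 + ω + 1) = 0 := by linear_combination hω3
      rcases mul_eq_zero.mp hfac with h | h
      · exact absurd (sub_eq_zero.mp h) hωne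
      · exact h
    have hcirc : ω ^ (2 ^ m + 1) = 1 := by
      obtain ⟨k, hk⟩ := (three_dvd_two_pow_add_one_iff m).mpr hmo
      rw [hk, pow_mul, hω3, one_pow]
    rcases Nat.even_mul.mp hije with hie | hje
    · obtain ⟨k, hk⟩ := hie
      have hA : ω ^ (2 ^ i) = ω := by
        rw [show i = 2 * k by omega]
        exact cube_pow_two_even hω3 k
      exact hall ω hcirc (by
        linear_combination (ω ^ (2^j) + ω) * hA + hωr + ω ^ (2^j) * ω * h2)
    · obtain ⟨k, hk⟩ := hje
      have hB : ω ^ (2 ^ j) = ω := by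
        rw [show j = 2 * k by omega]
        exact cube_pow_two_even hω3 k
      exact hall ω hcirc (by
        linear_combination (ω ^ (2^i) + ω) * hB + hωr + ω ^ (2^i) * ω * h2)
  · -- condition → no roots
    intro hcond x hx hH
    have hE1q : (x ^ (2^m)) ^ (2^i + 2^j) + (x ^ (2^m)) ^ (2^i + 1)
        + (x ^ (2^m)) ^ (2^j + 1) + x ^ (2^m) + 1 = 0 := by
      have h := congrArg (iterateFrobenius F 2 m) hH
      simpa only [map_add, map_pow, map_one, map_zero, iterateFrobenius_def] using h
    have tkey : ∀ n s : ℕ, (x ^ (2^m)) ^ n * x ^ (n + s) = x ^ s := by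
      intro n s
      rw [← pow_mul, ← pow_add, show 2^m * n + (n + s) = (2^m + 1) * n + s by ring,
        pow_add, pow_mul, hx, one_pow, one_mul]
    have t1 : (x ^ (2^m)) ^ (2^i + 2^j) * x ^ (2^i + 2^j + 1) = x := by
      have h := tkey (2^i + 2^j) 1
      rwa [pow_one] at h
    have t2 : (x ^ (2^m)) ^ (2^i + 1) * x ^ (2^i + 2^j + 1) = x ^ (2^j) := by
      rw [show 2^i + 2^j + 1 = (2^i + 1) + 2^j by ring]
      exact tkey _ _
    have t3 : (x ^ (2^m)) ^ (2^j + 1) * x ^ (2^i + 2^j + 1) = x ^ (2^i) := by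
      rw [show 2^i + 2^j + 1 = (2^j + 1) + 2^i by ring]
      exact tkey _ _
    have t4 : x ^ (2^m) * x ^ (2^i + 2^j + 1) = x ^ (2^i + 2^j) := by
      rw [show 2^i + 2^j + 1 = 1 + (2^i + 2^j) by ring, ← pow_one (x ^ (2^m))]
      exact tkey _ _
    have hE2 : x + x ^ (2^j) + x ^ (2^i) + x ^ (2^i + 2^j) + x ^ (2^i + 2^j + 1) = 0 := by
      calc x + x ^ (2^j) + x ^ (2^i) + x ^ (2^i + 2^j) + x ^ (2^i + 2^j + 1)
          = ((x ^ (2^m)) ^ (2^i + 2^j) + (x ^ (2^m)) ^ (2^i + 1) + (x ^ (2^m)) ^ (2^j + 1)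
              + x ^ (2^m) + 1) * x ^ (2^i + 2^j + 1) := by
            rw [add_mul, add_mul, add_mul, add_mul, one_mul, t1, t2, t3, t4]
        _ = 0 := by rw [hE1q, zero_mul]
    have hfac : (x^2 + x + 1) * (x ^ (2^i) + x ^ (2^j) + 1) = 0 := by
      linear_combination (x + 1) * hH + hE2
        - (x + x ^ (2^i) * x ^ (2^j) * x + x ^ (2^i) * x ^ (2^j)) * h2
    have hroot : x^2 + x + 1 = 0 := by
      rcases mul_eq_zero.mp hfac with h | hAB
      · exact h
      · have hB : (x ^ (2^j))^2 + x ^ (2^j) + 1 = 0 := by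
          linear_combination (x ^ (2^j) + x) * hAB - hH + h2
        have hB3 : x ^ (2^j * 3) = 1 := by
          have h := (by linear_combination (x ^ (2^j) - 1) * hB : (x ^ (2^j)) ^ 3 = 1)
          rwa [← pow_mul] at h
        have hq3 : x ^ ((2^m + 1) * 3) = 1 := by rw [pow_mul, hx, one_pow]
        have hcop : Nat.Coprime (2^j) (2^m + 1) := by
          apply Nat.Coprime.pow_left
          rw [Nat.Prime.coprime_iff_not_dvd Nat.prime_two]
          have h2m : (2:ℕ) ∣ 2^m := dvd_pow_self 2 hm.ne'
          omega
        have hd3 : orderOf x ∣ 3 := by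
          have d1 := orderOf_dvd_of_pow_eq_one hB3
          have d2 := orderOf_dvd_of_pow_eq_one hq3
          have hg := Nat.dvd_gcd d1 d2
          rwa [Nat.gcd_mul_right, hcop, one_mul] at hg
        have hx3 : x ^ 3 = 1 := orderOf_dvd_iff_pow_eq_one.mp hd3
        have hsplit : (x - 1) * (x^2 + x + 1) = 0 := by linear_combination hx3
        rcases mul_eq_zero.mp hsplit with h | h
        · exfalso
          have hx1 : x = 1 := sub_eq_zero.mp h
          rw [hx1] at hB
          simp only [one_pow] at hB
          exact one_ne_zero (by linear_combination hB - h2 : (1:F) = 0)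
        · exact h
    rcases hcond with hodd | heven
    · obtain ⟨hio, hjo⟩ := Nat.odd_mul.mp hodd
      have hx3 : x ^ 3 = 1 := by linear_combination (x - 1) * hroot
      obtain ⟨a, ha⟩ := hio
      obtain ⟨b, hb⟩ := hjo
      have hA : x ^ (2^i) = x^2 := by rw [ha]; exact cube_pow_two_odd hx3 a
      have hB : x ^ (2^j) = x^2 := by rw [hb]; exact cube_pow_two_odd hx3 b
      exact one_ne_zero (by
        linear_combination hH - (x ^ (2^j) + x) * hA - (x^2 + x) * hB
          - (x^2 + x) * hroot + x^2 * h2 : (1:F) = 0)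
    · have hx3 : x ^ 3 = 1 := by linear_combination (x - 1) * hroot
      have hxne : x ≠ 1 := by
        intro h
        rw [h] at hroot
        exact one_ne_zero (by linear_combination hroot - h2 : (1:F) = 0)
      have hord : orderOf x = 3 := by
        have hdvd : orderOf x ∣ 3 := orderOf_dvd_of_pow_eq_one hx3
        rcases (Nat.prime_three.eq_one_or_self_of_dvd _ hdvd) with h | h
        · exact absurd (orderOf_eq_one_iff.mp h) hxne
        · exact h
      have h3dvd : (3:ℕ) ∣ 2^m + 1 := hord ▸ orderOf_dvd_of_pow_eq_one hx
      exact (Nat.not_odd_iff_even.mpr heven) ((three_dvd_two_pow_add_one_iff m).mp h3dvd)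
end

section
/- The polynomial H_C(x) = x^{Q1+Q2+1} + x^{Q1} + x^{Q2} + x + 1 has no roots in the unit circle μ_{q+1} = {x ∈ F_{q^2} : x^{q+1} = 1} if and only if (1+i)·(1+j) is odd (equivalently, i and j are both even) or m is even. -/
private lemma tpm (i : ℕ) : 2 ^ i % 3 = if Even i then 1 else 2 := by
  induction i with
  | zero => simp
  | succ n ih =>
    rw [pow_succ, Nat.mul_mod, ih]
    by_cases h : Even n
    · simp [h, Nat.even_add_one]
    · simp [h, Nat.even_add_one]

private lemma charF (F : Type*) [Field F] [Fintype F] (m : ℕ)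
    (hF : Fintype.card F = (2 ^ m) ^ 2) : CharP F 2 := by
  have hcp := ringChar.charP F
  obtain ⟨n, hp, hcard⟩ := FiniteField.card F (ringChar F)
  rw [hF] at hcard
  have h1 : ringChar F ∣ (2 ^ m) ^ 2 := by
    rw [hcard]; exact dvd_pow_self (ringChar F) n.pos.ne'
  have h2 : ringChar F ∣ 2 := by
    have : (2 ^ m) ^ 2 = 2 ^ (m * 2) := by rw [pow_mul]
    rw [this] at h1
    exact hp.dvd_of_dvd_pow h1
  have : ringChar F = 2 := (Nat.prime_dvd_prime_iff_eq hp Nat.prime_two).mp h2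
  exact this ▸ hcp

private lemma keylemma {F : Type*} [Field F] [CharP F 2] (m i : ℕ) (hm : 0 < m)
    (Q1 Q2 : ℕ) (hQ1 : Q1 = 2 ^ i) (x : F)
    (hx : x ^ (2 ^ m + 1) = 1)
    (hroot : x ^ (Q1 + Q2 + 1) + x ^ Q1 + x ^ Q2 + x + 1 = 0) :
    x ^ 2 + x + 1 = 0 := by
  haveI : Fact (Nat.Prime 2) := ⟨Nat.prime_two⟩
  have h2 : (2 : F) = 0 := by exact_mod_cast CharP.cast_eq_zero F 2
  have hx0 : x ≠ 0 := by
    intro h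
    rw [h, zero_pow (by positivity : 2 ^ m + 1 ≠ 0)] at hx
    exact zero_ne_one hx
  set X1 := x ^ Q1 with hX1d
  set X2 := x ^ Q2 with hX2d
  have hE1 : x * X1 * X2 + X1 + X2 + x + 1 = 0 := by
    have e : x ^ (Q1 + Q2 + 1) = x * X1 * X2 := by
      rw [pow_add, pow_add, pow_one, hX1d, hX2d]; ring
    rw [e] at hroot; exact hroot
  -- conjugate equation via Frobenius
  have h0 : (x * X1 * X2 + X1 + X2 + x + 1) ^ 2 ^ m = 0 := by
    rw [hE1]; exact zero_pow (by positivity)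
  rw [add_pow_char_pow, add_pow_char_pow, add_pow_char_pow, add_pow_char_pow,
    one_pow, mul_pow, mul_pow] at h0
  have hxq : x ^ 2 ^ m * x = 1 := by rw [← pow_succ]; exact hx
  have hu : ∀ a : ℕ, (x ^ a) ^ 2 ^ m * x ^ a = 1 := by
    intro a
    rw [← pow_mul, ← pow_add, show a * 2 ^ m + a = (2 ^ m + 1) * a by ring,
      pow_mul, hx, one_pow]
  have hX1q : X1 ^ 2 ^ m * X1 = 1 := by rw [hX1d]; exact hu Q1
  have hX2q : X2 ^ 2 ^ m * X2 = 1 := by rw [hX2d]; exact hu Q2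
  have h1 : (x ^ 2 ^ m * X1 ^ 2 ^ m * X2 ^ 2 ^ m + X1 ^ 2 ^ m + X2 ^ 2 ^ m
      + x ^ 2 ^ m + 1) * (x * X1 * X2) = 0 := by
    rw [h0, zero_mul]
  have t1 : x ^ 2 ^ m * X1 ^ 2 ^ m * X2 ^ 2 ^ m * (x * X1 * X2) = 1 := by
    calc x ^ 2 ^ m * X1 ^ 2 ^ m * X2 ^ 2 ^ m * (x * X1 * X2)
        = (x ^ 2 ^ m * x) * ((X1 ^ 2 ^ m * X1) * (X2 ^ 2 ^ m * X2)) := by ring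
      _ = 1 := by rw [hxq, hX1q, hX2q]; ring
  have t2 : X1 ^ 2 ^ m * (x * X1 * X2) = x * X2 := by
    calc X1 ^ 2 ^ m * (x * X1 * X2) = (X1 ^ 2 ^ m * X1) * (x * X2) := by ring
      _ = x * X2 := by rw [hX1q]; ring
  have t3 : X2 ^ 2 ^ m * (x * X1 * X2) = x * X1 := by
    calc X2 ^ 2 ^ m * (x * X1 * X2) = (X2 ^ 2 ^ m * X2) * (x * X1) := by ring
      _ = x * X1 := by rw [hX2q]; ring
  have t4 : x ^ 2 ^ m * (x * X1 * X2) = X1 * X2 := by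
    calc x ^ 2 ^ m * (x * X1 * X2) = (x ^ 2 ^ m * x) * (X1 * X2) := by ring
      _ = X1 * X2 := by rw [hxq]; ring
  have hE2 : 1 + x * X2 + x * X1 + X1 * X2 + x * X1 * X2 = 0 := by
    rw [add_mul, add_mul, add_mul, add_mul, t1, t2, t3, t4, one_mul] at h1
    linear_combination h1
  have hmaster : (x ^ 2 + x + 1) * (X1 + X2 + 1) = 0 := by
    linear_combination (1 + x) * hE1 + x * hE2
      - (x + x * X1 * X2 + x ^ 2 * X1 * X2) * h2
  rcases mul_eq_zero.mp hmaster with h | hB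
  · exact h
  · have hX1sq : x * (X1 ^ 2 + X1 + 1) = 0 := by
      linear_combination hE1 - (x * X1 + 1) * hB + (x * X1 ^ 2 + x * X1) * h2
    have hX1e : X1 ^ 2 + X1 + 1 = 0 := by
      rcases mul_eq_zero.mp hX1sq with h | h
      · exact absurd h hx0
      · exact h
    have hX13 : X1 ^ 3 = 1 := by linear_combination (X1 - 1) * hX1e
    have hx3Q : x ^ (3 * Q1) = 1 := by
      rw [mul_comm, pow_mul, ← hX1d]; exact hX13
    have hdvd1 : orderOf x ∣ 3 * Q1 := orderOf_dvd_of_pow_eq_one hx3Q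
    have hdvd2 : orderOf x ∣ 2 ^ m + 1 := orderOf_dvd_of_pow_eq_one hx
    have hqodd : Odd (2 ^ m + 1) := by
      have he : Even (2 ^ m) := Nat.even_pow.mpr ⟨even_two, hm.ne'⟩
      exact he.add_one
    have hcop : Nat.Coprime (orderOf x) Q1 := by
      have hc2 : Nat.Coprime (2 ^ m + 1) Q1 := by
        rw [hQ1]
        exact Nat.Coprime.pow_right _ (Nat.coprime_two_right.mpr hqodd)
      exact Nat.Coprime.coprime_dvd_left hdvd2 hc2
    have hdvd3 : orderOf x ∣ 3 := Nat.Coprime.dvd_of_dvd_mul_right hcop hdvd1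
    have hx3 : x ^ 3 = 1 := orderOf_dvd_iff_pow_eq_one.mp hdvd3
    have hX1x : X1 = x ^ (Q1 % 3) := by rw [hX1d]; exact pow_eq_pow_mod Q1 hx3
    have hmod : Q1 % 3 = 1 ∨ Q1 % 3 = 2 := by
      rw [hQ1]
      have h := tpm i
      by_cases he : Even i
      · left; rw [if_pos he] at h; exact h
      · right; rw [if_neg he] at h; exact h
    rcases hmod with h | h
    · rw [hX1x, h, pow_one] at hX1e; exact hX1e
    · rw [hX1x, h] at hX1e
      have hsq : (x ^ 2 + x + 1) ^ 2 = 0 := by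
        linear_combination hX1e + (x ^ 3 + x ^ 2 + x) * h2
      exact pow_eq_zero_iff (two_ne_zero) |>.mp hsq

/-- `H_C(x) = x^{Q1+Q2+1} + x^{Q1} + x^{Q2} + x + 1` has no roots in the unit
circle `μ_{q+1}` of `F_{q^2}` iff `(1+i)·(1+j)` is odd or `m` is even. -/
theorem HC_no_roots_unit_circle_iff
    (m i j : ℕ) (hm : 0 < m) (hi : 0 < i) (hj : 0 < j)
    (q Q1 Q2 : ℕ) (hq : q = 2 ^ m) (hQ1 : Q1 = 2 ^ i) (hQ2 : Q2 = 2 ^ j)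
    (F : Type*) [Field F] [Fintype F] (hF : Fintype.card F = q ^ 2) :
    (∀ x : F, x ^ (q + 1) = 1 →
        x ^ (Q1 + Q2 + 1) + x ^ Q1 + x ^ Q2 + x + 1 ≠ 0) ↔
      (Odd ((1 + i) * (1 + j)) ∨ Even m) := by
  subst hq hQ1 hQ2
  haveI : Fact (Nat.Prime 2) := ⟨Nat.prime_two⟩
  haveI hchar : CharP F 2 := charF F m hF
  have h2 : (2 : F) = 0 := by exact_mod_cast CharP.cast_eq_zero F 2
  constructor
  · intro hno
    by_contra hcon
    push_neg at hcon
    obtain ⟨hodd, hmo⟩ := hcon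
    rw [Nat.not_odd_iff_even] at hodd
    rw [Nat.not_even_iff_odd] at hmo
    classical
    -- construct a primitive cube root of unity ω in F with ω ∈ μ_{q+1}
    have h3card : (3 : ℕ) ∣ Fintype.card Fˣ := by
      rw [Fintype.card_units, hF]
      have ha : (2 ^ m) ^ 2 % 3 = 1 := by
        rw [Nat.pow_mod]
        have h := tpm m
        by_cases he : Even m
        · rw [if_pos he] at h; rw [h]
        · rw [if_neg he] at h; rw [h]
      have hge : 1 ≤ (2 ^ m) ^ 2 := Nat.one_le_pow _ _ (by positivity)
      obtain ⟨b, hb⟩ : ∃ b, (2 ^ m) ^ 2 = b := ⟨_, rfl⟩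
      rw [hb] at ha hge ⊢
      omega
    obtain ⟨g, hg⟩ := exists_prime_orderOf_dvd_card 3 h3card
    have hg3 : g ^ 3 = 1 := by rw [← hg]; exact pow_orderOf_eq_one g
    have hω3 : (g : F) ^ 3 = 1 := by
      rw [← Units.val_pow_eq_pow_val, hg3, Units.val_one]
    have hωne : (g : F) ≠ 1 := by
      intro h
      have hg1 : g = 1 := Units.ext h
      rw [hg1, orderOf_one] at hg
      norm_num at hg
    have hω : (g : F) ^ 2 + (g : F) + 1 = 0 := by
      have hfac : ((g : F) - 1) * ((g : F) ^ 2 + (g : F) + 1) = 0 := by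
        linear_combination hω3
      rcases mul_eq_zero.mp hfac with h | h
      · exact absurd (by linear_combination h) hωne
      · exact h
    have hωq : (g : F) ^ (2 ^ m + 1) = 1 := by
      obtain ⟨k, hk⟩ : (3 : ℕ) ∣ 2 ^ m + 1 := by
        have h := tpm m
        rw [if_neg (Nat.not_even_iff_odd.mpr hmo)] at h
        omega
      rw [hk, pow_mul, hω3, one_pow]
    refine hno (g : F) hωq ?_
    rw [pow_eq_pow_mod (2 ^ i + 2 ^ j + 1) hω3, pow_eq_pow_mod (2 ^ i) hω3,
      pow_eq_pow_mod (2 ^ j) hω3]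
    have hi3 := tpm i
    have hj3 := tpm j
    rcases Nat.even_or_odd i with hie | hio <;> rcases Nat.even_or_odd j with hje | hjo
    · exfalso
      have : Odd ((1 + i) * (1 + j)) := by
        refine Odd.mul ?_ ?_
        · rw [add_comm]; exact Even.add_one hie
        · rw [add_comm]; exact Even.add_one hje
      exact (Nat.not_even_iff_odd.mpr this) hodd
    · -- i even, j odd
      rw [if_pos hie] at hi3
      rw [if_neg (Nat.not_even_iff_odd.mpr hjo)] at hj3
      have he : (2 ^ i + 2 ^ j + 1) % 3 = 1 := by omega
      rw [he, hi3, hj3]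
      linear_combination hω + (g : F) * h2
    · -- i odd, j even
      rw [if_neg (Nat.not_even_iff_odd.mpr hio)] at hi3
      rw [if_pos hje] at hj3
      have he : (2 ^ i + 2 ^ j + 1) % 3 = 1 := by omega
      rw [he, hi3, hj3]
      linear_combination hω + (g : F) * h2
    · -- both odd
      rw [if_neg (Nat.not_even_iff_odd.mpr hio)] at hi3
      rw [if_neg (Nat.not_even_iff_odd.mpr hjo)] at hj3
      have he : (2 ^ i + 2 ^ j + 1) % 3 = 2 := by omega
      rw [he, hi3, hj3]
      linear_combination hω + ((g : F) ^ 2) * h2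
  · intro hcond x hx hroot
    have hx2 : x ^ 2 + x + 1 = 0 := keylemma m i hm (2 ^ i) (2 ^ j) rfl x hx hroot
    have hx3 : x ^ 3 = 1 := by linear_combination (x - 1) * hx2
    have hxne1 : x ≠ 1 := by
      intro h
      rw [h] at hx2
      have h1 : (1 : F) = 0 := by linear_combination hx2 - h2
      exact one_ne_zero h1
    have hdvd : orderOf x ∣ 3 := orderOf_dvd_of_pow_eq_one hx3
    have hne : orderOf x ≠ 1 := by
      intro h
      exact hxne1 (orderOf_eq_one_iff.mp h)
    have ho3 : orderOf x = 3 := by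
      rcases (Nat.prime_three).eq_one_or_self_of_dvd _ hdvd with h | h
      · exact absurd h hne
      · exact h
    have h3q : (3 : ℕ) ∣ 2 ^ m + 1 := ho3 ▸ orderOf_dvd_of_pow_eq_one hx
    have hmodd : Odd m := by
      by_contra h
      rw [Nat.not_odd_iff_even] at h
      have ht := tpm m
      rw [if_pos h] at ht
      omega
    rcases hcond with hodd | heven
    · -- i, j both even
      obtain ⟨ho1, ho2⟩ := (Nat.odd_mul).mp hodd
      have hie : Even i := by
        rcases Nat.even_or_odd i with h | h
        · exact h
        · exfalso; rw [Nat.odd_iff] at h; rw [Nat.odd_iff] at ho1; omega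
      have hje : Even j := by
        rcases Nat.even_or_odd j with h | h
        · exact h
        · exfalso; rw [Nat.odd_iff] at h; rw [Nat.odd_iff] at ho2; omega
      have hi3 := tpm i
      have hj3 := tpm j
      rw [if_pos hie] at hi3
      rw [if_pos hje] at hj3
      have e1 : x ^ (2 ^ i) = x := by
        rw [pow_eq_pow_mod (2 ^ i) hx3, hi3, pow_one]
      have e2 : x ^ (2 ^ j) = x := by
        rw [pow_eq_pow_mod (2 ^ j) hx3, hj3, pow_one]
      have e3 : x ^ (2 ^ i + 2 ^ j + 1) = 1 := by
        have he : (2 ^ i + 2 ^ j + 1) % 3 = 0 := by omega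
        rw [pow_eq_pow_mod (2 ^ i + 2 ^ j + 1) hx3, he, pow_zero]
      rw [e1, e2, e3] at hroot
      have hx0 : x = 0 := by linear_combination hroot - (x + 1) * h2
      rw [hx0] at hx3
      simp at hx3
    · exact absurd heven (Nat.not_even_iff_odd.mpr hmodd)
end

section
/- In the polynomial ring F_2[x], for each of the three pairs (N, H) = (N_A, H_A), (N_B, H_B), (N_C, H_C), the following two identities hold, where N' and H' denote formal derivatives and Q(x) = x^2 + x + 1: (1) N'(x)·H(x) + N(x)·H'(x) = Q(x)^{Q1+Q2}; (2) N(x)^2 + N(x)·H(x) + H(x)^2 = Q(x)^{Q1+Q2+1}. -/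
open Polynomial

/-- In `F_2[x]`, for each pair `(N, H) ∈ {(N_A, H_A), (N_B, H_B), (N_C, H_C)}`,
with `Q(x) = x^2 + x + 1`:
(1) `N'·H + N·H' = Q^{Q1+Q2}`, and (2) `N^2 + N·H + H^2 = Q^{Q1+Q2+1}`. -/
theorem key_identities
    (i j : ℕ) (hi : 0 < i) (hj : 0 < j)
    (Q1 Q2 : ℕ) (hQ1 : Q1 = 2 ^ i) (hQ2 : Q2 = 2 ^ j)
    (Q NA HA NB HB NC HC : Polynomial (ZMod 2))
    (hQ : Q = X ^ 2 + X + 1)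
    (hNA : NA = X ^ (Q1 + Q2 + 1) + X ^ (Q1 + Q2) + X ^ Q1 + X ^ Q2 + X)
    (hHA : HA = X ^ (Q1 + Q2) + X ^ (Q1 + 1) + X ^ (Q2 + 1) + X + 1)
    (hNB : NB = X ^ (Q1 + Q2 + 1) + X ^ (Q2 + 1) + X ^ Q1 + X ^ Q2 + X)
    (hHB : HB = X ^ (Q1 + Q2) + X ^ (Q1 + 1) + X ^ Q1 + X ^ (Q2 + 1) + 1)
    (hNC : NC = X ^ (Q1 + Q2 + 1) + X ^ (Q1 + Q2) + X ^ (Q2 + 1) + X ^ (Q1 + 1) + 1)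
    (hHC : HC = X ^ (Q1 + Q2 + 1) + X ^ Q1 + X ^ Q2 + X + 1) :
    (derivative NA * HA + NA * derivative HA = Q ^ (Q1 + Q2) ∧
      NA ^ 2 + NA * HA + HA ^ 2 = Q ^ (Q1 + Q2 + 1)) ∧
    (derivative NB * HB + NB * derivative HB = Q ^ (Q1 + Q2) ∧
      NB ^ 2 + NB * HB + HB ^ 2 = Q ^ (Q1 + Q2 + 1)) ∧
    (derivative NC * HC + NC * derivative HC = Q ^ (Q1 + Q2) ∧
      NC ^ 2 + NC * HC + HC ^ 2 = Q ^ (Q1 + Q2 + 1)) := by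
  subst hQ1 hQ2 hQ hNA hHA hNB hHB hNC hHC
  have h2 : (2 : Polynomial (ZMod 2)) = 0 := by
    exact_mod_cast CharP.cast_eq_zero (Polynomial (ZMod 2)) 2
  have hz : (2 : ZMod 2) = 0 := by decide
  have hFr : ∀ n : ℕ, (X ^ 2 + X + 1 : Polynomial (ZMod 2)) ^ (2 ^ n)
      = (X ^ (2 ^ n)) ^ 2 + X ^ (2 ^ n) + 1 := by
    intro n
    rw [add_pow_char_pow, add_pow_char_pow, one_pow, ← pow_mul, ← pow_mul, Nat.mul_comm]
  have key : ∀ m n : ℕ, (X ^ 2 + X + 1 : Polynomial (ZMod 2)) ^ (m + n)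
      = (X ^ 2 + X + 1) ^ m * (X ^ 2 + X + 1) ^ n := fun m n => pow_add _ m n
  have dNA : derivative (X ^ (2^i + 2^j + 1) + X ^ (2^i + 2^j) + X ^ (2^i) + X ^ (2^j) + X
      : Polynomial (ZMod 2)) = X ^ (2^i + 2^j) + 1 := by
    simp [derivative_X_pow, Nat.cast_add, Nat.cast_pow, Nat.cast_ofNat, hz,
      zero_pow hi.ne', zero_pow hj.ne']
  have dHA : derivative (X ^ (2^i + 2^j) + X ^ (2^i + 1) + X ^ (2^j + 1) + X + 1
      : Polynomial (ZMod 2)) = X ^ (2^i) + X ^ (2^j) + 1 := by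
    simp [derivative_X_pow, Nat.cast_add, Nat.cast_pow, Nat.cast_ofNat, hz,
      zero_pow hi.ne', zero_pow hj.ne']
  have dNB : derivative (X ^ (2^i + 2^j + 1) + X ^ (2^j + 1) + X ^ (2^i) + X ^ (2^j) + X
      : Polynomial (ZMod 2)) = X ^ (2^i + 2^j) + X ^ (2^j) + 1 := by
    simp [derivative_X_pow, Nat.cast_add, Nat.cast_pow, Nat.cast_ofNat, hz,
      zero_pow hi.ne', zero_pow hj.ne']
  have dHB : derivative (X ^ (2^i + 2^j) + X ^ (2^i + 1) + X ^ (2^i) + X ^ (2^j + 1) + 1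
      : Polynomial (ZMod 2)) = X ^ (2^i) + X ^ (2^j) := by
    simp [derivative_X_pow, Nat.cast_add, Nat.cast_pow, Nat.cast_ofNat, hz,
      zero_pow hi.ne', zero_pow hj.ne']
  have dNC : derivative (X ^ (2^i + 2^j + 1) + X ^ (2^i + 2^j) + X ^ (2^j + 1) + X ^ (2^i + 1) + 1
      : Polynomial (ZMod 2)) = X ^ (2^i + 2^j) + X ^ (2^j) + X ^ (2^i) := by
    simp [derivative_X_pow, Nat.cast_add, Nat.cast_pow, Nat.cast_ofNat, hz,
      zero_pow hi.ne', zero_pow hj.ne']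
  have dHC : derivative (X ^ (2^i + 2^j + 1) + X ^ (2^i) + X ^ (2^j) + X + 1
      : Polynomial (ZMod 2)) = X ^ (2^i + 2^j) + 1 := by
    simp [derivative_X_pow, Nat.cast_add, Nat.cast_pow, Nat.cast_ofNat, hz,
      zero_pow hi.ne', zero_pow hj.ne']
  refine ⟨⟨?_, ?_⟩, ⟨?_, ?_⟩, ⟨?_, ?_⟩⟩
  · rw [dNA, dHA, key, hFr i, hFr j]
    linear_combination (X + (X ^ (2^j)) * X + (X ^ (2^i)) * X + 2 * (X ^ (2^i)) * (X ^ (2^j)) + (X ^ (2^i)) * (X ^ (2^j)) * X + (X ^ (2^i)) * (X ^ (2^j)) ^ 2 * X + (X ^ (2^i)) ^ 2 * (X ^ (2^j)) * X) * h2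
  · rw [key, key, hFr i, hFr j, pow_one]
    linear_combination (X + X ^ 2 + 2 * (X ^ (2^j)) * X + (X ^ (2^j)) * X ^ 2 + 2 * (X ^ (2^i)) * X + (X ^ (2^i)) * X ^ 2 + 2 * (X ^ (2^i)) * (X ^ (2^j)) + 4 * (X ^ (2^i)) * (X ^ (2^j)) * X + 2 * (X ^ (2^i)) * (X ^ (2^j)) * X ^ 2 + (X ^ (2^i)) * (X ^ (2^j)) ^ 2 + 2 * (X ^ (2^i)) * (X ^ (2^j)) ^ 2 * X + (X ^ (2^i)) ^ 2 * (X ^ (2^j)) + 2 * (X ^ (2^i)) ^ 2 * (X ^ (2^j)) * X + (X ^ (2^i)) ^ 2 * (X ^ (2^j)) ^ 2 + (X ^ (2^i)) ^ 2 * (X ^ (2^j)) ^ 2 * X) * h2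
  · rw [dNB, dHB, key, hFr i, hFr j]
    linear_combination ((X ^ (2^j)) * X + (X ^ (2^j)) ^ 2 * X + (X ^ (2^i)) * X + 2 * (X ^ (2^i)) * (X ^ (2^j)) + (X ^ (2^i)) * (X ^ (2^j)) * X + (X ^ (2^i)) * (X ^ (2^j)) ^ 2 * X + (X ^ (2^i)) ^ 2 * (X ^ (2^j)) * X) * h2
  · rw [key, key, hFr i, hFr j, pow_one]
    linear_combination (2 * (X ^ (2^j)) * X + (X ^ (2^j)) * X ^ 2 + (X ^ (2^j)) ^ 2 * X + (X ^ (2^j)) ^ 2 * X ^ 2 + (X ^ (2^i)) + 2 * (X ^ (2^i)) * X + 2 * (X ^ (2^i)) * (X ^ (2^j)) + 4 * (X ^ (2^i)) * (X ^ (2^j)) * X + 2 * (X ^ (2^i)) * (X ^ (2^j)) * X ^ 2 + 2 * (X ^ (2^i)) * (X ^ (2^j)) ^ 2 * X + (X ^ (2^i)) * (X ^ (2^j)) ^ 2 * X ^ 2 + (X ^ (2^i)) ^ 2 + (X ^ (2^i)) ^ 2 * X + (X ^ (2^i)) ^ 2 * (X ^ (2^j)) + 2 * (X ^ (2^i)) ^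 2 * (X ^ (2^j)) * X) * h2
  · rw [dNC, dHC, key, hFr i, hFr j]
    linear_combination ((X ^ (2^j)) * X + (X ^ (2^i)) * X + 2 * (X ^ (2^i)) * (X ^ (2^j)) + (X ^ (2^i)) * (X ^ (2^j)) * X + (X ^ (2^i)) * (X ^ (2^j)) ^ 2 * X + (X ^ (2^i)) ^ 2 * (X ^ (2^j)) * X + (X ^ (2^i)) ^ 2 * (X ^ (2^j)) ^ 2 * X) * h2
  · rw [key, key, hFr i, hFr j, pow_one]
    linear_combination (1 + X + (X ^ (2^j)) + 2 * (X ^ (2^j)) * X + (X ^ (2^i)) + 2 * (X ^ (2^i)) * X + 2 * (X ^ (2^i)) * (X ^ (2^j)) + 4 * (X ^ (2^i)) * (X ^ (2^j)) * X + 2 * (X ^ (2^i)) * (X ^ (2^j)) * X ^ 2 + 2 * (X ^ (2^i)) * (X ^ (2^j)) ^ 2 * X + (X ^ (2^i)) * (X ^ (2^j)) ^ 2 * X ^ 2 + 2 * (X ^ (2^i)) ^ 2 * (X ^ (2^j)) * X + (X ^ (2^i)) ^ 2 * (X ^ (2^j)) * X ^ 2 + (X ^ (2^i)) ^ 2 *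 (X ^ (2^j)) ^ 2 * X + (X ^ (2^i)) ^ 2 * (X ^ (2^j)) ^ 2 * X ^ 2) * h2
end
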